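/- arXiv:1307.7307 — 4 statements merged into one kernel-verified Lean document; each statement's English description precedes it below -/
import Mathlib

section
/- For the cycle C_n on n ≥ 4 vertices, the immunity number with one agent equals 2: a single agent moving always in one fixed direction around the cycle fully decontaminates C_n within at most 2n steps when τ = 2, while with τ = 1 no strategy can ever have more than two vertices simultaneously decontaminated. -/
open scoped Classical

/-- One-agent decontamination process with temporal immunity `τ` on a graph `G`,
driven by the agent's walk `agent : ℕ → V`.  At each time `t` the state consists of
the set of contaminated vertices together with the exposure time of every vertex.
Initially (time `0`) every vertex except the agent's start vertex is contaminated.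
At each step the agent's new position is decontaminated, and a decontaminated
vertex that has been continuously exposed to a contaminated neighbour for `τ`
time units (without an agent visit) becomes recontaminated. -/
noncomputable def deconState {V : Type*} (G : SimpleGraph V) (τ : ℕ)
    (agent : ℕ → V) : ℕ → (V → Prop) × (V → ℕ)
  | 0 => (fun v => v ≠ agent 0, fun _ => 0)
  | (t + 1) =>
      let C : V → Prop := (deconState G τ agent t).1
      let X : V → ℕ := (deconState G τ agent t).2
      let p : V := agent (t + 1)
      -- contamination after the agent's move, before recontamination
      let C' : V → Prop := fun v => C v ∧ v ≠ p
      -- recontamination of exposed vertices whose exposure time has reached τ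
      let C'' : V → Prop := fun v =>
        C' v ∨ (v ≠ p ∧ ¬ C v ∧ (∃ w, G.Adj v w ∧ C' w) ∧ τ ≤ X v)
      (C'', fun v =>
        if v = p ∨ C'' v ∨ ¬ (∃ w, G.Adj v w ∧ C'' w) then 0 else X v + 1)

/-- The agent moves along edges of `G` (or stays put) at each time step. -/
def IsWalkStrategy {V : Type*} (G : SimpleGraph V) (agent : ℕ → V) : Prop :=
  ∀ t, agent (t + 1) = agent t ∨ G.Adj (agent t) (agent (t + 1))

/-- At time `T` every vertex is decontaminated. -/
def CleanAt {V : Type*} (G : SimpleGraph V) (τ : ℕ) (agent : ℕ → V) (T : ℕ) : Prop :=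
  ∀ v, ¬ (deconState G τ agent T).1 v

/-- The strategy `agent` fully decontaminates `G` with temporal immunity `τ`. -/
def Decontaminates {V : Type*} (G : SimpleGraph V) (τ : ℕ) (agent : ℕ → V) : Prop :=
  IsWalkStrategy G agent ∧ ∃ T, CleanAt G τ agent T

/-- `G` can be fully decontaminated by one agent with temporal immunity `τ`. -/
def CanDecon {V : Type*} (G : SimpleGraph V) (τ : ℕ) : Prop :=
  ∃ agent : ℕ → V, Decontaminates G τ agent

/-- The immunity number `ι(G)`: the least temporal immunity with which a single
agent can fully decontaminate `G`. -/
noncomputable def iotaNum {V : Type*} (G : SimpleGraph V) : ℕ :=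
  sInf {τ | CanDecon G τ}

/-- A strategy is monotone if a decontaminated vertex never gets recontaminated. -/
def MonotoneStrategy {V : Type*} (G : SimpleGraph V) (τ : ℕ) (agent : ℕ → V) : Prop :=
  ∀ t v, ¬ (deconState G τ agent t).1 v → ¬ (deconState G τ agent (t + 1)).1 v

/-!
With immunity `τ ≤ 1` only the agent's current and previous positions can be clean. A vertex left
behind earlier has already been exposed, so it survives a step only if each of its neighbours is
clean or being visited, i.e. is one of the agent's last two positions; these are adjacent, so with
the vertex they would form a triangle (minimum degree two makes the two neighbours distinct).
Hence a triangle-free graph of minimum degree two is never cleaned.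

With `τ = 2` the agent walks around `C_n` in one direction. The clean vertices always form an arc
ending at the agent whose tail is recontaminated every second step, so the arc gains one vertex
every two steps until it covers the cycle at time `2n - 5`.
-/

open SimpleGraph

section Dynamics

variable {V : Type*} {G : SimpleGraph V} {τ : ℕ} {ag : ℕ → V}

theorem deconState_zero_fst (v : V) : (deconState G τ ag 0).1 v ↔ v ≠ ag 0 := Iff.rfl

theorem deconState_zero_snd (v : V) : (deconState G τ ag 0).2 v = 0 := rfl

theorem deconState_succ_fst (t : ℕ) (v : V) :
    (deconState G τ ag (t + 1)).1 v ↔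
      ((deconState G τ ag t).1 v ∧ v ≠ ag (t + 1)) ∨
        (v ≠ ag (t + 1) ∧ ¬ (deconState G τ ag t).1 v ∧
          (∃ w, G.Adj v w ∧ (deconState G τ ag t).1 w ∧ w ≠ ag (t + 1)) ∧
          τ ≤ (deconState G τ ag t).2 v) :=
  Iff.rfl

theorem deconState_succ_snd (t : ℕ) (v : V) :
    (deconState G τ ag (t + 1)).2 v =
      if v = ag (t + 1) ∨ (deconState G τ ag (t + 1)).1 v ∨
          ¬ ∃ w, G.Adj v w ∧ (deconState G τ ag (t + 1)).1 w then 0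
      else (deconState G τ ag t).2 v + 1 :=
  if_congr Iff.rfl rfl rfl

theorem cleanAt_succ_of_forall_contaminated_eq {t : ℕ}
    (h : ∀ v, (deconState G τ ag t).1 v → v = ag (t + 1)) : CleanAt G τ ag (t + 1) := by
  rintro v (⟨hv, hne⟩ | ⟨-, -, ⟨w, -, hw, hne⟩, -⟩)
  · exact hne (h v hv)
  · exact hne (h w hw)

end Dynamics

theorem Set.Nontrivial.ne_and_mem_of_subset_pair {α : Type*} {s : Set α} {x y : α}
    (hs : s.Nontrivial) (h : s ⊆ {x, y}) : x ≠ y ∧ x ∈ s ∧ y ∈ s := by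
  obtain ⟨u, hu, w, hw, huw⟩ := hs
  rcases h hu with rfl | rfl <;> rcases h hw with rfl | rfl <;> simp_all [Ne.symm huw]

section LowerBound

variable {V : Type*} {G : SimpleGraph V} {τ : ℕ} {ag : ℕ → V}

theorem eq_or_eq_of_not_deconState_succ_fst (hwalk : IsWalkStrategy G ag)
    (hG : G.CliqueFree 3) (hdeg : ∀ v, (G.neighborSet v).Nontrivial) (hτ : τ ≤ 1)
    {t : ℕ} {b : V}
    (hinv : ∀ v, ¬ (deconState G τ ag t).1 v →
      v = ag t ∨ (v = b ∧ 0 < (deconState G τ ag t).2 v))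
    {v : V} (hv : ¬ (deconState G τ ag (t + 1)).1 v) : v = ag (t + 1) ∨ v = ag t := by
  by_contra! hne
  rw [deconState_succ_fst] at hv
  have hclean : ¬ (deconState G τ ag t).1 v := fun h => hv (Or.inl ⟨h, hne.1⟩)
  obtain ⟨rfl, hX⟩ := (hinv v hclean).resolve_left hne.2
  have hnbr : G.neighborSet v ⊆ {ag (t + 1), ag t} := by
    intro w hw
    by_cases hcw : (deconState G τ ag t).1 w
    · refine Or.inl (by_contra fun h => hv (Or.inr ⟨hne.1, hclean, ⟨w, hw, hcw, h⟩, ?_⟩))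
      omega
    · rcases hinv w hcw with h | ⟨rfl, -⟩
      · exact Or.inr h
      · exact absurd hw (G.loopless.irrefl _)
  obtain ⟨hne', hadj₁, hadj₂⟩ := (hdeg v).ne_and_mem_of_subset_pair hnbr
  have hadj : G.Adj (ag t) (ag (t + 1)) := (hwalk t).resolve_left hne'
  exact hG {v, ag t, ag (t + 1)} (is3Clique_triple_iff.2 ⟨hadj₂, hadj₁, hadj⟩)

theorem deconState_succ_snd_pos (hdeg : ∀ v, (G.neighborSet v).Nontrivial) {t : ℕ}
    (hpair : ∀ v, ¬ (deconState G τ ag (t + 1)).1 v → v = ag (t + 1) ∨ v = ag t)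
    (hclean : ¬ (deconState G τ ag (t + 1)).1 (ag t)) (hne : ag t ≠ ag (t + 1)) :
    0 < (deconState G τ ag (t + 1)).2 (ag t) := by
  rw [deconState_succ_snd, if_neg]
  · omega
  rintro (h | h | h)
  · exact hne h
  · exact hclean h
  · refine (hdeg (ag t)).not_subset_singleton (x := ag (t + 1)) fun w hw => ?_
    exact (hpair w fun hc => h ⟨w, hw, hc⟩).resolve_right (G.ne_of_adj hw).symm

theorem exists_clean_eq_agent_or_exposed (hwalk : IsWalkStrategy G ag)
    (hG : G.CliqueFree 3) (hdeg : ∀ v, (G.neighborSet v).Nontrivial) (hτ : τ ≤ 1) (t : ℕ) :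
    ∃ b, ∀ v, ¬ (deconState G τ ag t).1 v →
      v = ag t ∨ (v = b ∧ 0 < (deconState G τ ag t).2 v) := by
  induction t with
  | zero => exact ⟨ag 0, fun v hv => Or.inl (not_not.1 hv)⟩
  | succ t ih =>
    obtain ⟨b, hb⟩ := ih
    have hpair := fun v => eq_or_eq_of_not_deconState_succ_fst hwalk hG hdeg hτ hb (v := v)
    refine ⟨ag t, fun v hv => ?_⟩
    rcases hpair v hv with h | rfl
    · exact Or.inl h
    · by_cases h : ag t = ag (t + 1)
      · exact Or.inl h
      · exact Or.inr ⟨rfl, deconState_succ_snd_pos hdeg hpair hv h⟩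

theorem not_canDecon_of_cliqueFree_three (hG : G.CliqueFree 3)
    (hdeg : ∀ v, (G.neighborSet v).Nontrivial) (hτ : τ ≤ 1) : ¬ CanDecon G τ := by
  rintro ⟨ag, hwalk, T, hT⟩
  obtain ⟨b, hb⟩ := exists_clean_eq_agent_or_exposed hwalk hG hdeg hτ T
  refine (hdeg (ag T)).not_subset_singleton (x := b) fun w hw => ?_
  exact ((hb w (hT w)).resolve_left (G.ne_of_adj hw).symm).1

end LowerBound

section Cycle

variable {n : ℕ} [NeZero n]

theorem Fin.val_add_one_eq_or (x : Fin n) :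
    (x + 1).val = x.val + 1 ∨ (x.val + 1 = n ∧ (x + 1).val = 0) := by
  obtain ⟨m, rfl⟩ : ∃ m, n = m + 1 := ⟨n - 1, (Nat.sub_add_cancel NeZero.one_le).symm⟩
  rw [Fin.val_add_one]
  split_ifs with h
  · exact Or.inr ⟨by simp [h], rfl⟩
  · exact Or.inl rfl

theorem Fin.val_sub_one_eq_or (x : Fin n) :
    (x - 1).val + 1 = x.val ∨ (x.val = 0 ∧ (x - 1).val + 1 = n) := by
  obtain ⟨m, rfl⟩ : ∃ m, n = m + 1 := ⟨n - 1, (Nat.sub_add_cancel NeZero.one_le).symm⟩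
  rw [Fin.coe_sub_one]
  split_ifs with h
  · exact Or.inr ⟨by simp [h], rfl⟩
  · have : x.val ≠ 0 := Fin.val_ne_zero_iff.2 h
    exact Or.inl (by omega)

theorem Fin.val_sub_inj {v w a : Fin n} : (v - a).val = (w - a).val ↔ v = w := by
  rw [Fin.val_inj, sub_left_inj]

theorem Fin.val_sub_eq_zero_iff {v a : Fin n} : (v - a).val = 0 ↔ v = a := by
  rw [Fin.val_eq_zero_iff, sub_eq_zero]

theorem Fin.val_sub_one_sub_self (a : Fin n) : (a - 1 - a).val + 1 = n := by
  rw [sub_right_comm, sub_self]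
  simpa using Fin.val_sub_one_eq_or (0 : Fin n)

namespace SimpleGraph

theorem cycleGraph_adj_iff (hn : 2 ≤ n) {v w : Fin n} :
    (cycleGraph n).Adj v w ↔ w = v + 1 ∨ w = v - 1 := by
  obtain ⟨m, rfl⟩ : ∃ m, n = m + 2 := ⟨n - 2, by omega⟩
  rw [← mem_neighborSet, cycleGraph_neighborSet]
  simp [or_comm]

theorem two_le_of_cycleGraph_adj {v w : Fin n} (h : (cycleGraph n).Adj v w) : 2 ≤ n := by
  rcases n with _ | _ | n
  · exact v.elim0
  · exact absurd h cycleGraph_one_adj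
  · omega

theorem cycleGraph_adj_val_sub {v w : Fin n} (h : (cycleGraph n).Adj v w) (a : Fin n) :
    (w - a).val = (v - a).val + 1 ∨ (w - a).val + 1 = (v - a).val ∨
      ((v - a).val + 1 = n ∧ (w - a).val = 0) ∨ ((v - a).val = 0 ∧ (w - a).val + 1 = n) := by
  rcases (cycleGraph_adj_iff (two_le_of_cycleGraph_adj h)).1 h with rfl | rfl
  · rw [add_sub_right_comm]
    have := Fin.val_add_one_eq_or (v - a)
    omega
  · rw [sub_right_comm]
    have := Fin.val_sub_one_eq_or (v - a)
    omega

theorem cycleGraph_cliqueFree_three (hn : 4 ≤ n) : (cycleGraph n).CliqueFree 3 := by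
  intro s hs
  obtain ⟨a, b, c, hab, hac, hbc, -⟩ := is3Clique_iff.1 hs
  have h₁ := cycleGraph_adj_val_sub hab a
  have h₂ := cycleGraph_adj_val_sub hac a
  have h₃ := cycleGraph_adj_val_sub hbc a
  simp only [sub_self, Fin.val_zero] at h₁ h₂
  omega

theorem cycleGraph_neighborSet_nontrivial (hn : 3 ≤ n) (v : Fin n) :
    ((cycleGraph n).neighborSet v).Nontrivial := by
  refine ⟨v + 1, (cycleGraph_adj_iff (by omega)).2 (Or.inl rfl),
    v - 1, (cycleGraph_adj_iff (by omega)).2 (Or.inr rfl), fun h => ?_⟩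
  have h₁ := Fin.val_add_one_eq_or v
  have h₂ := Fin.val_sub_one_eq_or v
  rw [h] at h₁
  omega

end SimpleGraph

variable {τ : ℕ} {ag : ℕ → Fin n}

/-- The clean vertices form the arc `a, a + 1, …, a + ℓ` ending at the agent (`(v - a).val` is the
forward distance from `a` to `v`), and only the tail `a` has nonzero exposure, namely `e`. -/
structure IsArcState (τ : ℕ) (ag : ℕ → Fin n) (t : ℕ) (a : Fin n) (ℓ e : ℕ) : Prop where
  val_agent_sub : (ag t - a).val = ℓ
  contaminated_iff : ∀ v, (deconState (cycleGraph n) τ ag t).1 v ↔ ℓ < (v - a).val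
  exposure_eq : ∀ v, (deconState (cycleGraph n) τ ag t).2 v = if v = a then e else 0

theorem isArcState_zero : IsArcState τ ag 0 (ag 0) 0 0 where
  val_agent_sub := by simp
  contaminated_iff v := by
    rw [deconState_zero_fst, Nat.pos_iff_ne_zero, Ne, Ne, Fin.val_sub_eq_zero_iff]
  exposure_eq v := by rw [deconState_zero_snd, ite_self]

theorem deconState_succ_snd_of_arc {t ℓ : ℕ} {a : Fin n}
    (hC : ∀ v, (deconState (cycleGraph n) τ ag (t + 1)).1 v ↔ ℓ < (v - a).val)
    (hp : (ag (t + 1) - a).val = ℓ) (hℓ : 0 < ℓ) (hℓn : ℓ + 1 < n) (v : Fin n) :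
    (deconState (cycleGraph n) τ ag (t + 1)).2 v =
      if v = a then (deconState (cycleGraph n) τ ag t).2 a + 1 else 0 := by
  have hpv : v = ag (t + 1) ↔ (v - a).val = ℓ := by rw [← hp, Fin.val_sub_inj]
  rw [deconState_succ_snd, hpv, hC]
  by_cases hva : v = a
  · subst hva
    rw [if_pos rfl, if_neg]
    rintro (h | h | h)
    · simp at h
      omega
    · simp at h
    · refine h ⟨v - 1, (cycleGraph_adj_iff (by omega)).2 (Or.inr rfl), ?_⟩
      have := Fin.val_sub_one_sub_self v
      rw [hC]
      omega
  · rw [if_neg hva, if_pos]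
    have hv₀ : (v - a).val ≠ 0 := fun h => hva (Fin.val_sub_eq_zero_iff.1 h)
    refine or_iff_not_imp_left.2 fun hv => or_iff_not_imp_left.2 fun hv' => ?_
    rintro ⟨w, hw, hcw⟩
    rw [hC] at hcw
    have := cycleGraph_adj_val_sub hw a
    omega

namespace IsArcState

variable {t : ℕ} {a : Fin n} {ℓ e : ℕ}

theorem val_agent_succ_sub (hs : IsArcState τ ag t a ℓ e) (hmove : ag (t + 1) = ag t + 1)
    (hℓ : ℓ + 1 < n) : (ag (t + 1) - a).val = ℓ + 1 := by
  rw [hmove, add_sub_right_comm, Fin.val_add_one_of_lt' (by rw [hs.val_agent_sub]; exact hℓ),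
    hs.val_agent_sub]

theorem contaminated_succ_iff (hs : IsArcState τ ag t a ℓ e) (hmove : ag (t + 1) = ag t + 1)
    (hℓ : ℓ + 2 < n) (hτ : 0 < τ) (v : Fin n) :
    (deconState (cycleGraph n) τ ag (t + 1)).1 v ↔ ℓ + 1 < (v - a).val ∨ (v = a ∧ τ ≤ e) := by
  have hne : ∀ w, w ≠ ag (t + 1) ↔ (w - a).val ≠ ℓ + 1 := fun w => by
    rw [← hs.val_agent_succ_sub hmove (by omega), Ne, Ne, Fin.val_sub_inj]
  rw [deconState_succ_fst, hs.contaminated_iff, hs.exposure_eq, hne]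
  constructor
  · rintro (⟨h₁, h₂⟩ | ⟨-, -, -, h⟩)
    · omega
    · split_ifs at h with hv
      · exact Or.inr ⟨hv, h⟩
      · omega
  · rintro (h | ⟨rfl, h⟩)
    · left
      omega
    · have := Fin.val_sub_one_sub_self v
      refine Or.inr ⟨by simp, by simp, ⟨v - 1, ?_, (hs.contaminated_iff _).2 (by omega),
        (hne _).2 (by omega)⟩, by simpa⟩
      exact (cycleGraph_adj_iff (by omega)).2 (Or.inr rfl)

theorem succ_of_lt (hs : IsArcState τ ag t a ℓ e) (hmove : ag (t + 1) = ag t + 1)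
    (hℓ : ℓ + 2 < n) (he : e < τ) : IsArcState τ ag (t + 1) a (ℓ + 1) (e + 1) := by
  have hp := hs.val_agent_succ_sub hmove (by omega)
  have hC : ∀ v, (deconState (cycleGraph n) τ ag (t + 1)).1 v ↔ ℓ + 1 < (v - a).val := fun v => by
    rw [hs.contaminated_succ_iff hmove hℓ (by omega), or_iff_left fun h => by omega]
  refine ⟨hp, hC, fun v => ?_⟩
  rw [deconState_succ_snd_of_arc hC hp (by omega) (by omega), hs.exposure_eq, if_pos rfl]

theorem succ_of_le (hs : IsArcState τ ag t a ℓ e) (hmove : ag (t + 1) = ag t + 1)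
    (hℓ : ℓ + 2 < n) (hℓ₀ : 0 < ℓ) (hτ : 0 < τ) (he : τ ≤ e) :
    IsArcState τ ag (t + 1) (a + 1) ℓ 1 := by
  have hshift : ∀ v, v ≠ a → (v - (a + 1)).val + 1 = (v - a).val := fun v hv => by
    rw [← sub_sub]
    have := Fin.val_sub_one_eq_or (v - a)
    have := Fin.val_sub_eq_zero_iff.not.2 hv
    omega
  have hp : (ag (t + 1) - (a + 1)).val = ℓ := by
    have hp := hs.val_agent_succ_sub hmove (by omega)
    have := hshift (ag (t + 1)) fun h => by simp [h] at hp
    omega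
  have hC : ∀ v, (deconState (cycleGraph n) τ ag (t + 1)).1 v ↔ ℓ < (v - (a + 1)).val := by
    intro v
    rw [hs.contaminated_succ_iff hmove hℓ hτ, and_iff_left he]
    by_cases hv : v = a
    · subst hv
      have := Fin.val_sub_one_sub_self v
      rw [sub_right_comm] at this
      rw [← sub_sub]
      simp only [or_true, true_iff]
      omega
    · have := hshift v hv
      simp only [hv, or_false]
      omega
  have hne : a + 1 ≠ a := fun h => by
    have := Fin.val_add_one_eq_or a
    rw [h] at this
    omega
  refine ⟨hp, hC, fun v => ?_⟩
  rw [deconState_succ_snd_of_arc hC hp hℓ₀ (by omega), hs.exposure_eq, if_neg hne]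

theorem cleanAt_succ (hs : IsArcState τ ag t a ℓ e) (hmove : ag (t + 1) = ag t + 1)
    (hℓ : ℓ + 2 = n) : CleanAt (cycleGraph n) τ ag (t + 1) := by
  have hp := hs.val_agent_succ_sub hmove (by omega)
  refine cleanAt_succ_of_forall_contaminated_eq fun v hv => ?_
  rw [hs.contaminated_iff] at hv
  rw [← Fin.val_sub_inj (a := a), hp]
  have := (v - a).isLt
  omega

end IsArcState

theorem exists_isArcState_two (hmove : ∀ t, ag (t + 1) = ag t + 1) {k : ℕ} (hk : k + 4 ≤ n) :
    ∃ a, IsArcState 2 ag (2 * k + 2) a (k + 2) 2 := by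
  induction k with
  | zero =>
    exact ⟨ag 0, (isArcState_zero.succ_of_lt (hmove 0) (by omega) (by omega)).succ_of_lt
      (hmove 1) (by omega) (by omega)⟩
  | succ k ih =>
    obtain ⟨a, hs⟩ := ih (by omega)
    exact ⟨a + 1, (hs.succ_of_le (hmove _) (by omega) (by omega) (by omega) le_rfl).succ_of_lt
      (hmove _) (by omega) (by omega)⟩

theorem cleanAt_of_forall_succ_eq_add_one (hn : 4 ≤ n) (hmove : ∀ t, ag (t + 1) = ag t + 1) :
    CleanAt (cycleGraph n) 2 ag (2 * n - 5) := by
  obtain ⟨a, hs⟩ := exists_isArcState_two hmove (k := n - 4) (by omega)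
  rw [show 2 * n - 5 = 2 * (n - 4) + 2 + 1 by omega]
  exact hs.cleanAt_succ (hmove _) (by omega)

open Fin.NatCast in
theorem canDecon_cycleGraph_two (hn : 4 ≤ n) : CanDecon (cycleGraph n) 2 := by
  have hmove : ∀ t : ℕ, ((t + 1 : ℕ) : Fin n) = (t : Fin n) + 1 := Nat.cast_succ
  exact ⟨fun t => (t : Fin n), fun t => Or.inr ((cycleGraph_adj_iff (by omega)).2 (Or.inl (hmove t))),
    2 * n - 5, cleanAt_of_forall_succ_eq_add_one hn hmove⟩

end Cycle

/-- The cycle `C_n` (`n ≥ 4`) has immunity number `2`. -/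
theorem immunity_cycleGraph (n : ℕ) (hn : 4 ≤ n) :
    iotaNum (SimpleGraph.cycleGraph n) = 2 := by
  have : NeZero n := ⟨by omega⟩
  refine IsLeast.csInf_eq ⟨canDecon_cycleGraph_two hn, fun τ hτ => ?_⟩
  by_contra! h
  exact not_canDecon_of_cliqueFree_three (cycleGraph_cliqueFree_three hn)
    (cycleGraph_neighborSet_nontrivial (by omega)) (by omega) hτ
end

section
/- If S is a spider on n vertices, then the immunity number of S with one agent is O(√n); in particular ι(S) ≤ 4√n when the root degree is at most √n, and the bound O(√n) holds in general by first decontaminating the arms of length at least √n (of which there are at most √n) and then the remaining short arms monotonically. -/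
open scoped Classical

/-!
A spider is its root `r` together with arms, paths hanging off `r`. With `s = ⌊√n⌋` the agent uses
immunity `τ = 4s`: it first walks to the end of every arm and back, one arm after the other, and
then walks to depth `δ = s + 1` of every arm and back. While the agent is out on a long arm of the
first pass the root may be recontaminated, and contamination then creeps back into the cleaned
arms, one vertex every `τ` steps. The whole tour lasts at most `4n` steps, fewer than `(δ + 2) τ`,
so this front does not reach depth `δ + 1` before the tour ends; the second pass, whose trips are
too short to let the root recontaminate, sweeps away what lies above it. The proof exhibits an
explicit over-approximation of the contaminated set at every time, empty at the end of the tour.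
-/

section Certificate

variable {V : Type*} {G : SimpleGraph V} {τ : ℕ} {agent : ℕ → V}

theorem deconState_succ_fst_imp {t : ℕ} {v : V} (h : (deconState G τ agent (t + 1)).1 v) :
    v ≠ agent (t + 1) ∧ ((deconState G τ agent t).1 v ∨ τ ≤ (deconState G τ agent t).2 v) := by
  rcases h with ⟨hv, hne⟩ | ⟨hne, -, -, hτ⟩
  exacts [⟨hne, Or.inl hv⟩, ⟨hne, Or.inr hτ⟩]

theorem deconState_snd_succ_le (t : ℕ) (v : V) :
    (deconState G τ agent (t + 1)).2 v ≤ (deconState G τ agent t).2 v + 1 := by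
  change ite _ _ _ ≤ _
  split_ifs <;> omega

theorem deconState_snd_eq_zero {s : ℕ} {v : V}
    (h : s = 0 ∨ agent s = v ∨ ∀ w, G.Adj v w → ¬ (deconState G τ agent s).1 w) :
    (deconState G τ agent s).2 v = 0 := by
  cases s with
  | zero => rfl
  | succ s =>
    change ite _ _ _ = 0
    refine if_pos ?_
    rcases h with h | h | h
    · omega
    · exact Or.inl h.symm
    · exact Or.inr (Or.inr fun ⟨w, hw, hc⟩ => h w hw hc)

theorem deconState_snd_add_le (s u : ℕ) (v : V) :
    (deconState G τ agent (s + u)).2 v ≤ (deconState G τ agent s).2 v + u := by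
  induction u with
  | zero => rfl
  | succ u ih => exact (deconState_snd_succ_le (s + u) v).trans (by omega)

/-- At time `s` the exposure counter of `v` is reset, as soon as `E s` contains every
contaminated vertex. -/
def QuietAt (G : SimpleGraph V) (E : ℕ → V → Prop) (agent : ℕ → V) (s : ℕ) (v : V) : Prop :=
  s = 0 ∨ agent s = v ∨ ∀ w, G.Adj v w → ¬ E s w

/-- `E` over-approximates the contaminated set: a vertex may leave `E` only if its exposure
counter was reset less than `τ` steps earlier. -/
structure IsContaminationBound (G : SimpleGraph V) (τ : ℕ) (agent : ℕ → V)
    (E : ℕ → V → Prop) : Prop where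
  init : ∀ v, v ≠ agent 0 → E 0 v
  persist : ∀ t v, E t v → v ≠ agent (t + 1) → E (t + 1) v
  expire : ∀ t v, ¬ E (t + 1) v → v ≠ agent (t + 1) →
    ∃ s ≤ t, t < s + τ ∧ QuietAt G E agent s v

theorem IsContaminationBound.contaminated_imp {E : ℕ → V → Prop}
    (hE : IsContaminationBound G τ agent E) (t : ℕ) (v : V)
    (hv : (deconState G τ agent t).1 v) : E t v := by
  induction t using Nat.strong_induction_on generalizing v with
  | _ t ih =>
    cases t with
    | zero => exact hE.init v hv
    | succ t =>
      obtain ⟨hne, hv | hτ⟩ := deconState_succ_fst_imp hv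
      · exact hE.persist t v (ih t t.lt_succ_self v hv) hne
      · by_contra hnE
        obtain ⟨s, hst, hts, hquiet⟩ := hE.expire t v hnE hne
        have hzero : (deconState G τ agent s).2 v = 0 :=
          deconState_snd_eq_zero (hquiet.imp_right (Or.imp_right fun h w hw hc =>
            h w hw (ih s (Nat.lt_succ_of_le hst) w hc)))
        have := deconState_snd_add_le (G := G) (τ := τ) (agent := agent) s (t - s) v
        rw [Nat.add_sub_cancel' hst] at this
        omega

theorem IsContaminationBound.canDecon {E : ℕ → V → Prop}
    (hE : IsContaminationBound G τ agent E) (hwalk : IsWalkStrategy G agent) {T : ℕ}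
    (hT : ∀ v, ¬ E T v) : CanDecon G τ :=
  ⟨agent, hwalk, T, fun v hv => hT v (hE.contaminated_imp T v hv)⟩

end Certificate

def tripStart (d : ℕ → ℕ) (i : ℕ) : ℕ := 2 * ∑ j ∈ Finset.range i, d j

theorem tripStart_succ (d : ℕ → ℕ) (i : ℕ) : tripStart d (i + 1) = tripStart d i + 2 * d i := by
  simp only [tripStart, Finset.sum_range_succ, mul_add]

theorem tripStart_mono (d : ℕ → ℕ) : Monotone (tripStart d) :=
  monotone_nat_of_le_succ fun i => by rw [tripStart_succ]; omega

theorem tripStart_le_tripStart {d d' : ℕ → ℕ} (h : ∀ i, d' i ≤ d i) (n : ℕ) :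
    tripStart d' n ≤ tripStart d n :=
  Nat.mul_le_mul_left 2 (Finset.sum_le_sum fun i _ => h i)

/-- Arm `i < k` of a spider with root `r` is the path `r = vtx i 0, vtx i 1, …, vtx i (len i)`;
every vertex but `r` lies on exactly one arm, and only consecutive vertices of an arm are
adjacent. -/
structure SpiderArms {V : Type*} (G : SimpleGraph V) (r : V) where
  k : ℕ
  len : ℕ → ℕ
  vtx : ℕ → ℕ → V
  vtx_zero : ∀ i, vtx i 0 = r
  adj_vtx_succ : ∀ {i c}, i < k → c < len i → G.Adj (vtx i c) (vtx i (c + 1))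
  eq_of_vtx_eq : ∀ {i j c c'}, i < k → j < k → c ≤ len i → c' ≤ len j →
    vtx i c = vtx j c' → c = c' ∧ (c = 0 ∨ i = j)
  exists_vtx : ∀ v, v ≠ r → ∃ i < k, ∃ c, 0 < c ∧ c ≤ len i ∧ vtx i c = v
  eq_vtx_of_adj : ∀ {i c w}, i < k → 0 < c → c ≤ len i → G.Adj (vtx i c) w →
    w = vtx i (c - 1) ∨ (c < len i ∧ w = vtx i (c + 1))

namespace SpiderArms

variable {V : Type*} {G : SimpleGraph V} {r : V} (A : SpiderArms G r)

theorem vtx_ne_root {i c : ℕ} (hi : i < A.k) (hc : 0 < c) (hcl : c ≤ A.len i) :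
    A.vtx i c ≠ r := fun h =>
  hc.ne' (A.eq_of_vtx_eq hi hi hcl (Nat.zero_le _) (h.trans (A.vtx_zero i).symm)).1

theorem vtx_eq_or_adj {i a b : ℕ} (hi : i < A.k) (ha : a ≤ A.len i) (hb : b ≤ A.len i)
    (hab : a ≤ b + 1) (hba : b ≤ a + 1) :
    A.vtx i b = A.vtx i a ∨ G.Adj (A.vtx i a) (A.vtx i b) := by
  rcases Nat.lt_trichotomy a b with h | rfl | h
  · obtain rfl : b = a + 1 := by omega
    exact Or.inr (A.adj_vtx_succ hi (by omega))
  · exact Or.inl rfl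
  · obtain rfl : a = b + 1 := by omega
    exact Or.inr (A.adj_vtx_succ hi (by omega)).symm

theorem sum_len_lt_card [Fintype V] : ∑ i ∈ Finset.range A.k, A.len i < Fintype.card V := by
  let S := (Finset.range A.k).sigma fun i => Finset.Icc 1 (A.len i)
  have hS : S.card = ∑ i ∈ Finset.range A.k, A.len i := by
    simp only [S, Finset.card_sigma, Nat.card_Icc, Nat.add_sub_cancel]
  have hinj : Set.InjOn (fun p : Σ _ : ℕ, ℕ => A.vtx p.1 p.2) S := by
    rintro ⟨i, c⟩ hic ⟨j, c'⟩ hjc' h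
    simp only [S, Finset.coe_sigma, Set.mem_sigma_iff, Finset.mem_coe, Finset.mem_range,
      Finset.mem_Icc] at hic hjc'
    obtain ⟨rfl, h0 | rfl⟩ := A.eq_of_vtx_eq hic.1 hjc'.1 hic.2.2 hjc'.2.2 h
    · omega
    · rfl
  have hmaps : Set.MapsTo (fun p : Σ _ : ℕ, ℕ => A.vtx p.1 p.2) S (Finset.univ.erase r) := by
    rintro ⟨i, c⟩ hic
    simp only [S, Finset.coe_sigma, Set.mem_sigma_iff, Finset.mem_coe, Finset.mem_range,
      Finset.mem_Icc] at hic
    simpa using A.vtx_ne_root hic.1 (by omega) hic.2.2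
  have := Finset.card_le_card_of_injOn _ hmaps hinj
  rw [Finset.card_erase_of_mem (Finset.mem_univ r), Finset.card_univ] at this
  have : 0 < Fintype.card V := Fintype.card_pos_iff.mpr ⟨r⟩
  omega

/-- `pass d n` explores arms `0, …, n - 1` in turn, walking out to depth `d i` and back, so that
it spends the interval `[tripStart d i, tripStart d (i + 1)]` on arm `i`. -/
def pass (d : ℕ → ℕ) : ℕ → ℕ → V
  | 0, _ => r
  | n + 1, t =>
    if t < tripStart d n then pass d n t
    else A.vtx n (min (t - tripStart d n) (tripStart d (n + 1) - t))

theorem pass_of_le {d : ℕ → ℕ} {n t : ℕ} (ht : tripStart d n ≤ t) : A.pass d n t = r := by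
  cases n with
  | zero => rfl
  | succ n =>
    have := tripStart_mono d (Nat.le_add_right n 1)
    rw [pass, if_neg (by omega), Nat.sub_eq_zero_of_le ht, Nat.min_zero, A.vtx_zero]

theorem pass_eq_vtx {d : ℕ → ℕ} {n i t : ℕ} (hi : i < n) (h₁ : tripStart d i ≤ t)
    (h₂ : t ≤ tripStart d (i + 1)) :
    A.pass d n t = A.vtx i (min (t - tripStart d i) (tripStart d (i + 1) - t)) := by
  induction n with
  | zero => omega
  | succ n ih =>
    rw [pass]
    rcases Nat.lt_succ_iff_lt_or_eq.mp hi with hi | rfl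
    · have := tripStart_mono d (show i + 1 ≤ n from hi)
      split_ifs with ht
      · exact ih hi
      · obtain rfl : t = tripStart d (i + 1) := by omega
        rw [Nat.sub_self, Nat.min_zero, A.vtx_zero, show tripStart d (i + 1) - tripStart d n = 0 by
          omega, Nat.zero_min, A.vtx_zero]
    · rw [if_neg (by omega)]

theorem pass_tripStart_add {d : ℕ → ℕ} {n i c : ℕ} (hi : i < n) (hc : c ≤ d i) :
    A.pass d n (tripStart d i + c) = A.vtx i c := by
  have := tripStart_succ d i
  rw [A.pass_eq_vtx hi (by omega) (by omega)]
  congr 1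
  omega

theorem pass_eq_root_or_mem_trip (d : ℕ → ℕ) (n t : ℕ) :
    A.pass d n t = r ∨ ∃ i < n, tripStart d i < t ∧ t < tripStart d (i + 1) := by
  induction n with
  | zero => exact Or.inl rfl
  | succ n ih =>
    rw [pass]
    split_ifs with ht
    · exact ih.imp_right fun ⟨i, hi, h⟩ => ⟨i, by omega, h⟩
    · by_cases h : tripStart d n < t ∧ t < tripStart d (n + 1)
      · exact Or.inr ⟨n, n.lt_succ_self, h⟩
      · left
        rw [show min (t - tripStart d n) (tripStart d (n + 1) - t) = 0 by omega, A.vtx_zero]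

theorem pass_zero (d : ℕ → ℕ) (n : ℕ) : A.pass d n 0 = r :=
  (A.pass_eq_root_or_mem_trip d n 0).resolve_right fun ⟨_, _, h, _⟩ => Nat.not_lt_zero _ h

theorem pass_eq_or_adj {d : ℕ → ℕ} (hd : ∀ i < A.k, d i ≤ A.len i) {n : ℕ} (hn : n ≤ A.k)
    (t : ℕ) : A.pass d n (t + 1) = A.pass d n t ∨ G.Adj (A.pass d n t) (A.pass d n (t + 1)) := by
  induction n with
  | zero => exact Or.inl rfl
  | succ n ih =>
    have hstep := tripStart_succ d n
    have hdn := hd n (by omega)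
    rcases lt_or_ge (t + 1) (tripStart d n) with ht | ht
    · simp only [pass, if_pos ht, if_pos (show t < tripStart d n by omega)]
      exact ih (by omega)
    rcases ht.eq_or_lt with ht | ht
    · have hprev : A.pass d (n + 1) t = A.pass d n t := by rw [pass, if_pos (by omega)]
      have hnext : A.pass d (n + 1) (t + 1) = A.pass d n (t + 1) := by
        rw [pass, if_neg (by omega), A.pass_of_le ht.le, ← ht, Nat.sub_self, Nat.zero_min,
          A.vtx_zero]
      rw [hprev, hnext]
      exact ih (by omega)
    · rw [pass, pass, if_neg (by omega), if_neg (by omega)]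
      exact A.vtx_eq_or_adj (by omega) (by omega) (by omega) (by omega) (by omega)

section Tour

variable (δ : ℕ)

def repairStart (i : ℕ) : ℕ := tripStart A.len A.k + tripStart (fun j => min δ (A.len j)) i

/-- A first pass to the end of every arm, then a second pass to depth `δ`. -/
def tour (t : ℕ) : V :=
  if t < tripStart A.len A.k then A.pass A.len A.k t
  else A.pass (fun j => min δ (A.len j)) A.k (t - tripStart A.len A.k)

theorem tour_of_le {t : ℕ} (ht : t ≤ tripStart A.len A.k) : A.tour δ t = A.pass A.len A.k t := by
  rw [tour]
  split_ifs with h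
  · rfl
  · rw [show t = tripStart A.len A.k by omega, Nat.sub_self, pass_zero, A.pass_of_le le_rfl]

theorem tour_of_ge {t : ℕ} (ht : tripStart A.len A.k ≤ t) :
    A.tour δ t = A.pass (fun j => min δ (A.len j)) A.k (t - tripStart A.len A.k) := by
  rw [tour, if_neg (by omega)]

theorem tour_tripStart_add {i c : ℕ} (hi : i < A.k) (hc : c ≤ A.len i) :
    A.tour δ (tripStart A.len i + c) = A.vtx i c := by
  have := tripStart_succ A.len i
  have := tripStart_mono A.len (show i + 1 ≤ A.k from hi)
  rw [A.tour_of_le δ (by omega), A.pass_tripStart_add hi hc]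

theorem tour_tripStart {j : ℕ} (hj : j ≤ A.k) : A.tour δ (tripStart A.len j) = r := by
  rcases hj.lt_or_eq with hj | rfl
  · simpa [A.vtx_zero] using A.tour_tripStart_add δ hj (Nat.zero_le _)
  · rw [A.tour_of_le δ le_rfl, A.pass_of_le le_rfl]

theorem tour_repairStart_add {i c : ℕ} (hi : i < A.k) (hc : c ≤ min δ (A.len i)) :
    A.tour δ (A.repairStart δ i + c) = A.vtx i c := by
  rw [A.tour_of_ge δ (by unfold repairStart; omega), repairStart, Nat.add_assoc,
    Nat.add_sub_cancel_left, A.pass_tripStart_add hi hc]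

theorem tour_eq_root_or_mem_trip (t : ℕ) :
    A.tour δ t = r ∨ (∃ i < A.k, tripStart A.len i < t ∧ t < tripStart A.len (i + 1)) ∨
      ∃ i < A.k, A.repairStart δ i < t ∧ t < A.repairStart δ (i + 1) := by
  rcases le_or_gt t (tripStart A.len A.k) with ht | ht
  · rw [A.tour_of_le δ ht]
    exact (A.pass_eq_root_or_mem_trip _ _ t).imp_right Or.inl
  · rw [A.tour_of_ge δ ht.le]
    refine (A.pass_eq_root_or_mem_trip _ _ _).imp_right fun ⟨i, hi, h⟩ => Or.inr ⟨i, hi, ?_⟩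
    simp only [repairStart]
    omega

theorem tour_isWalkStrategy : IsWalkStrategy G (A.tour δ) := by
  intro t
  rcases le_or_gt (t + 1) (tripStart A.len A.k) with ht | ht
  · rw [A.tour_of_le δ ht, A.tour_of_le δ (by omega)]
    exact A.pass_eq_or_adj (fun _ _ => le_rfl) le_rfl t
  · rw [A.tour_of_ge δ (by omega), A.tour_of_ge δ (by omega), Nat.sub_add_comm (by omega)]
    exact A.pass_eq_or_adj (fun _ _ => min_le_right _ _) le_rfl _

end Tour

section Bound

variable (τ δ : ℕ)

/-- The root can be contaminated only during first-pass trips, from `τ` steps after the agent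
left it; from there contamination reaches depth `c` of the arm `(c + 1) τ` steps after the trip
into it began, and is removed by the second pass if `c ≤ δ`. -/
def possiblyContaminated (t : ℕ) (v : V) : Prop :=
  (v = r ∧ ∃ i < A.k, tripStart A.len i + τ ≤ t ∧ t < tripStart A.len (i + 1)) ∨
  ∃ i < A.k, ∃ c, 0 < c ∧ c ≤ A.len i ∧ v = A.vtx i c ∧
    (t < tripStart A.len i + c ∨
      (c ≤ δ ∧ tripStart A.len i + (c + 1) * τ ≤ t ∧ t < A.repairStart δ i + c))

theorem possiblyContaminated_root_iff {t : ℕ} :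
    A.possiblyContaminated τ δ t r ↔
      ∃ i < A.k, tripStart A.len i + τ ≤ t ∧ t < tripStart A.len (i + 1) := by
  refine ⟨?_, fun h => Or.inl ⟨rfl, h⟩⟩
  rintro (⟨-, h⟩ | ⟨i, hi, c, hc, hcl, h, -⟩)
  exacts [h, absurd h.symm (A.vtx_ne_root hi hc hcl)]

theorem possiblyContaminated_vtx_iff {i c t : ℕ} (hi : i < A.k) (hc : 0 < c)
    (hcl : c ≤ A.len i) :
    A.possiblyContaminated τ δ t (A.vtx i c) ↔
      t < tripStart A.len i + c ∨
        (c ≤ δ ∧ tripStart A.len i + (c + 1) * τ ≤ t ∧ t < A.repairStart δ i + c) := by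
  refine ⟨?_, fun h => Or.inr ⟨i, hi, c, hc, hcl, rfl, h⟩⟩
  rintro (⟨h, -⟩ | ⟨j, hj, c', hc', hcl', h, hE⟩)
  · exact absurd h (A.vtx_ne_root hi hc hcl)
  · obtain ⟨rfl, h0 | rfl⟩ := A.eq_of_vtx_eq hi hj hcl hcl' h
    exacts [absurd h0 hc.ne', hE]

theorem tripStart_add_two_mul_le {i : ℕ} (hi : i < A.k) :
    tripStart A.len i + 2 * A.len i ≤ tripStart A.len A.k :=
  tripStart_succ A.len i ▸ tripStart_mono A.len hi

theorem tripStart_le_repairStart (i : ℕ) : tripStart A.len A.k ≤ A.repairStart δ i :=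
  Nat.le_add_right _ _

theorem repairStart_succ (i : ℕ) :
    A.repairStart δ (i + 1) = A.repairStart δ i + 2 * min δ (A.len i) := by
  simp only [repairStart, tripStart_succ, Nat.add_assoc]

theorem repairStart_add_two_mul_le {i : ℕ} (hi : i < A.k) :
    A.repairStart δ i + 2 * min δ (A.len i) ≤ A.repairStart δ A.k :=
  A.repairStart_succ δ i ▸ Nat.add_le_add_left (tripStart_mono _ hi) _

/-- Past depth `δ` the second pass is not needed: the contamination front, which advances
one vertex per `τ` steps, has not yet reached depth `c > δ` when the tour ends. -/
theorem repairStart_add_le {i c : ℕ} (hτ : 2 * tripStart A.len A.k + δ + 1 ≤ (δ + 2) * τ)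
    (hi : i ≤ A.k) (hc : δ < c) :
    A.repairStart δ i + c ≤ tripStart A.len i + (c + 1) * τ := by
  have hend : A.repairStart δ i ≤ 2 * tripStart A.len A.k := by
    have := tripStart_le_tripStart (fun j => min_le_right δ (A.len j)) i
    have := tripStart_mono A.len hi
    simp only [repairStart]
    omega
  have hτ₁ : 1 ≤ τ := Nat.pos_of_ne_zero fun h => by simp [h] at hτ
  obtain ⟨e, rfl⟩ := Nat.exists_eq_add_of_lt hc
  nlinarith [Nat.mul_le_mul_left e hτ₁]

theorem not_possiblyContaminated_root {i s : ℕ} (h₁ : tripStart A.len i ≤ s)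
    (h₂ : s < tripStart A.len i + τ) : ¬ A.possiblyContaminated τ δ s r := by
  rw [possiblyContaminated_root_iff]
  rintro ⟨j, -, hj₁, hj₂⟩
  rcases le_or_gt i j with h | h
  · have := tripStart_mono A.len h
    omega
  · have := tripStart_mono A.len (show j + 1 ≤ i from h)
    omega

theorem forall_adj_not_possiblyContaminated {i c s : ℕ} (hi : i < A.k) (hc : 0 < c)
    (hcl : c ≤ A.len i) (hprev : ¬ A.possiblyContaminated τ δ s (A.vtx i (c - 1)))
    (hnext : c < A.len i → ¬ A.possiblyContaminated τ δ s (A.vtx i (c + 1))) :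
    ∀ w, G.Adj (A.vtx i c) w → ¬ A.possiblyContaminated τ δ s w := by
  intro w hw
  rcases A.eq_vtx_of_adj hi hc hcl hw with rfl | ⟨hlt, rfl⟩
  exacts [hprev, hnext hlt]

theorem not_possiblyContaminated_prev {i c s : ℕ} (hi : i < A.k) (hc : 0 < c) (hcl : c ≤ A.len i)
    (hroot : c = 1 → ¬ A.possiblyContaminated τ δ s r)
    (hprev : 1 < c → ¬ (s < tripStart A.len i + (c - 1) ∨ (c - 1 ≤ δ ∧
      tripStart A.len i + c * τ ≤ s ∧ s < A.repairStart δ i + (c - 1)))) :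
    ¬ A.possiblyContaminated τ δ s (A.vtx i (c - 1)) := by
  rcases Nat.lt_or_ge 1 c with h | h
  · rw [A.possiblyContaminated_vtx_iff τ δ hi (by omega) (by omega), Nat.sub_add_cancel hc]
    exact hprev h
  · obtain rfl : c = 1 := by omega
    rw [Nat.sub_self, A.vtx_zero]
    exact hroot rfl

end Bound

section Schedule

variable {τ δ : ℕ}

theorem forall_adj_not_possiblyContaminated_after_visit {i c s : ℕ} (hi : i < A.k) (hc : 0 < c)
    (hcl : c ≤ A.len i) (h₁ : tripStart A.len i + c < s) (h₂ : s < tripStart A.len i + c * τ) :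
    ∀ w, G.Adj (A.vtx i c) w → ¬ A.possiblyContaminated τ δ s w := by
  have : (c + 1 + 1) * τ = c * τ + 2 * τ := by ring
  refine A.forall_adj_not_possiblyContaminated τ δ hi hc hcl ?_ fun hlt => ?_
  · refine A.not_possiblyContaminated_prev τ δ hi hc hcl (fun hc1 => ?_) fun _ => by omega
    subst hc1
    exact A.not_possiblyContaminated_root τ δ (i := i) (by omega) (by omega)
  · rw [A.possiblyContaminated_vtx_iff τ δ (c := c + 1) hi (by omega) hlt]
    omega

theorem forall_adj_not_possiblyContaminated_after_repair {i c s : ℕ} (hi : i < A.k) (hc : 0 < c)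
    (hcl : c ≤ A.len i) (h₁ : A.repairStart δ i + c ≤ s + 1)
    (h₂ : A.repairStart δ i + c < s ∨ δ < c) :
    ∀ w, G.Adj (A.vtx i c) w → ¬ A.possiblyContaminated τ δ s w := by
  have := A.tripStart_add_two_mul_le hi
  have := A.tripStart_le_repairStart δ i
  refine A.forall_adj_not_possiblyContaminated τ δ hi hc hcl ?_ fun hlt => ?_
  · refine A.not_possiblyContaminated_prev τ δ hi hc hcl (fun hc1 => ?_) fun _ => by omega
    rw [possiblyContaminated_root_iff]
    rintro ⟨j, hj, -, hj₂⟩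
    have := tripStart_mono A.len (show j + 1 ≤ A.k from hj)
    omega
  · rw [A.possiblyContaminated_vtx_iff τ δ (c := c + 1) hi (by omega) hlt]
    omega

theorem exists_recent_quietAt_root (hδτ : 2 * δ < τ) {t : ℕ}
    (hnE : ¬ A.possiblyContaminated τ δ (t + 1) r) (hne : r ≠ A.tour δ (t + 1)) :
    ∃ s ≤ t, t < s + τ ∧ QuietAt G (A.possiblyContaminated τ δ) (A.tour δ) s r := by
  rcases A.tour_eq_root_or_mem_trip δ (t + 1) with h | ⟨i, hi, h₁, h₂⟩ | ⟨i, hi, h₁, h₂⟩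
  · exact absurd h.symm hne
  · refine ⟨tripStart A.len i, by omega, ?_, Or.inr (Or.inl (A.tour_tripStart δ hi.le))⟩
    by_contra h
    exact hnE ((A.possiblyContaminated_root_iff τ δ).mpr ⟨i, hi, by omega, h₂⟩)
  · have := A.repairStart_succ δ i
    have := A.tour_repairStart_add δ hi (Nat.zero_le _)
    rw [Nat.add_zero, A.vtx_zero] at this
    exact ⟨A.repairStart δ i, by omega, by omega, Or.inr (Or.inl this)⟩

theorem exists_recent_quietAt_vtx (hτ₃ : 3 ≤ τ)
    (hτ : 2 * tripStart A.len A.k + δ + 1 ≤ (δ + 2) * τ) {i c t : ℕ} (hi : i < A.k) (hc : 0 < c)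
    (hcl : c ≤ A.len i) (hnE : ¬ A.possiblyContaminated τ δ (t + 1) (A.vtx i c))
    (hne : A.vtx i c ≠ A.tour δ (t + 1)) :
    ∃ s ≤ t, t < s + τ ∧ QuietAt G (A.possiblyContaminated τ δ) (A.tour δ) s (A.vtx i c) := by
  have hvisit := A.tour_tripStart_add δ hi hcl
  rw [A.possiblyContaminated_vtx_iff τ δ hi hc hcl] at hnE
  have hvisited : tripStart A.len i + c ≤ t := by
    by_contra h
    exact hne (by rw [show t + 1 = tripStart A.len i + c by omega, hvisit])
  have hcτ : c + 2 ≤ c * τ := by nlinarith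
  have hstep : (c + 1) * τ = c * τ + τ := by ring
  rcases lt_or_ge t (tripStart A.len i + c * τ) with hlt | hge
  · refine ⟨t, le_rfl, by omega, Or.inr ?_⟩
    rcases hvisited.eq_or_lt with heq | hgt
    · exact Or.inl (heq ▸ hvisit)
    · exact Or.inr (A.forall_adj_not_possiblyContaminated_after_visit hi hc hcl hgt hlt)
  rcases lt_or_ge (t + 1) (tripStart A.len i + (c + 1) * τ) with hlt | hge'
  · exact ⟨tripStart A.len i + c * τ - 1, by omega, by omega, Or.inr (Or.inr
      (A.forall_adj_not_possiblyContaminated_after_visit hi hc hcl (by omega) (by omega)))⟩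
  have hrepair : A.repairStart δ i + c ≤ t + 1 := by
    rcases le_or_gt c δ with hcδ | hcδ
    · omega
    · exact (A.repairStart_add_le τ δ hτ hi.le hcδ).trans hge'
  refine ⟨t, le_rfl, by omega, Or.inr ?_⟩
  by_cases hend : A.repairStart δ i + c < t ∨ δ < c
  · exact Or.inr (A.forall_adj_not_possiblyContaminated_after_repair hi hc hcl hrepair hend)
  · have hrevisit := A.tour_repairStart_add δ hi (c := c) (by omega)
    rcases (show t = A.repairStart δ i + c ∨ t + 1 = A.repairStart δ i + c by omega) with h | h
    · exact Or.inl (h ▸ hrevisit)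
    · exact absurd (h ▸ hrevisit).symm hne

theorem isContaminationBound (hτ₃ : 3 ≤ τ) (hδτ : 2 * δ < τ)
    (hτ : 2 * tripStart A.len A.k + δ + 1 ≤ (δ + 2) * τ) :
    IsContaminationBound G τ (A.tour δ) (A.possiblyContaminated τ δ) where
  init v hv := by
    obtain ⟨i, hi, c, hc, hcl, rfl⟩ := A.exists_vtx v (by simpa [tour, pass_zero] using hv)
    exact Or.inr ⟨i, hi, c, hc, hcl, rfl, Or.inl (by omega)⟩
  persist t v hv hne := by
    rcases hv with ⟨rfl, i, hi, h₁, h₂⟩ | ⟨i, hi, c, hc, hcl, rfl, h | ⟨hcδ, h₁, h₂⟩⟩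
    · refine Or.inl ⟨rfl, i, hi, by omega, lt_of_le_of_ne h₂ fun h => hne ?_⟩
      rw [h, A.tour_tripStart δ hi]
    · refine Or.inr ⟨i, hi, c, hc, hcl, rfl, Or.inl (lt_of_le_of_ne h fun h => hne ?_)⟩
      rw [h, A.tour_tripStart_add δ hi hcl]
    · refine Or.inr ⟨i, hi, c, hc, hcl, rfl, Or.inr ⟨hcδ, by omega,
        lt_of_le_of_ne h₂ fun h => hne ?_⟩⟩
      rw [h, A.tour_repairStart_add δ hi (le_min hcδ hcl)]
  expire t v hnE hne := by
    by_cases hv : v = r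
    · subst hv
      exact A.exists_recent_quietAt_root hδτ hnE hne
    · obtain ⟨i, hi, c, hc, hcl, rfl⟩ := A.exists_vtx v hv
      exact A.exists_recent_quietAt_vtx hτ₃ hτ hi hc hcl hnE hne

theorem not_possiblyContaminated_end (v : V) :
    ¬ A.possiblyContaminated τ δ (A.repairStart δ A.k) v := by
  rintro (⟨-, i, hi, -, h⟩ | ⟨i, hi, c, hc, hcl, -, h | ⟨hcδ, -, h⟩⟩)
  · have := tripStart_mono A.len (show i + 1 ≤ A.k from hi)
    have := A.tripStart_le_repairStart δ A.k
    omega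
  · have := A.tripStart_add_two_mul_le hi
    have := A.tripStart_le_repairStart δ A.k
    omega
  · have := A.repairStart_add_two_mul_le δ hi
    omega

theorem canDecon (hτ₃ : 3 ≤ τ) (hδτ : 2 * δ < τ)
    (hτ : 2 * tripStart A.len A.k + δ + 1 ≤ (δ + 2) * τ) : CanDecon G τ :=
  (A.isContaminationBound hτ₃ hδτ hτ).canDecon (A.tour_isWalkStrategy δ)
    A.not_possiblyContaminated_end

end Schedule

end SpiderArms

namespace SimpleGraph.IsTree

variable {V : Type*} {G : SimpleGraph V} (hG : G.IsTree) (r : V)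

noncomputable def path (v : V) : G.Walk r v := (hG.existsUnique_path r v).exists.choose

theorem isPath_path (v : V) : (hG.path r v).IsPath :=
  (hG.existsUnique_path r v).exists.choose_spec

theorem eq_path {v : V} {p : G.Walk r v} (hp : p.IsPath) : p = hG.path r v :=
  (hG.existsUnique_path r v).unique hp (hG.isPath_path r v)

theorem length_path (v : V) : (hG.path r v).length = G.dist r v := by
  obtain ⟨p, hp, hlen⟩ := hG.connected.exists_path_of_dist r v
  rw [← hG.eq_path r hp, hlen]

theorem path_getVert (v : V) (j : ℕ) :
    hG.path r ((hG.path r v).getVert j) = (hG.path r v).take j :=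
  (hG.eq_path r ((hG.isPath_path r v).take j)).symm

theorem dist_getVert_path (v : V) (j : ℕ) :
    G.dist r ((hG.path r v).getVert j) = min j (G.dist r v) := by
  rw [← hG.length_path, path_getVert, Walk.take_length, length_path]

theorem getVert_path_getVert (v : V) (j i : ℕ) :
    (hG.path r ((hG.path r v).getVert j)).getVert i = (hG.path r v).getVert (min j i) := by
  rw [path_getVert, Walk.take_getVert]

theorem snd_path_getVert (v : V) {j : ℕ} (hj : 0 < j) :
    (hG.path r ((hG.path r v).getVert j)).snd = (hG.path r v).snd := by
  rw [Walk.snd, getVert_path_getVert, Nat.min_eq_right hj]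

theorem dist_penultimate_path (v : V) :
    G.dist r (hG.path r v).penultimate = G.dist r v - 1 := by
  rw [Walk.penultimate, dist_getVert_path, length_path]
  omega

theorem penultimate_path_getVert (v : V) {c : ℕ} (hc : c ≤ G.dist r v) :
    (hG.path r ((hG.path r v).getVert c)).penultimate = (hG.path r v).getVert (c - 1) := by
  rw [Walk.penultimate, length_path, dist_getVert_path, Nat.min_eq_left hc, getVert_path_getVert,
    Nat.min_eq_right (Nat.sub_le c 1)]

theorem adj_penultimate_path {v : V} (hv : v ≠ r) : G.Adj (hG.path r v).penultimate v :=
  Walk.adj_penultimate (Walk.not_nil_of_ne hv.symm)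

theorem eq_penultimate_or_eq_penultimate {u w : V} (h : G.Adj u w) :
    w = (hG.path r u).penultimate ∨ u = (hG.path r w).penultimate := by
  by_cases hu : u ∈ (hG.path r w).support
  · right
    rw [hG.isAcyclic.path_concat (hG.isPath_path r u) (hG.isPath_path r w) h hu,
      Walk.penultimate_concat]
  · left
    have hw := hG.isAcyclic.mem_support_of_ne_mem_support_of_adj_of_isPath (hG.isPath_path r u)
      (hG.isPath_path r w) h hu
    rw [hG.isAcyclic.path_concat (hG.isPath_path r w) (hG.isPath_path r u) h.symm hw,
      Walk.penultimate_concat]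

theorem eq_of_snd_path_eq [Finite V] (h2 : ∀ v, v ≠ r → (G.neighborSet v).ncard ≤ 2) (d : ℕ)
    {v w : V} (hv : v ≠ r) (hw : w ≠ r) (hsnd : (hG.path r v).snd = (hG.path r w).snd)
    (hdv : G.dist r v = d) (hdw : G.dist r w = d) : v = w := by
  induction d using Nat.strong_induction_on generalizing v w with
  | _ d ih =>
    obtain _ | _ | d := d
    · exact absurd hdv (hG.connected.pos_dist_of_ne hv.symm).ne'
    · have hv1 := Walk.getVert_length (hG.path r v)
      have hw1 := Walk.getVert_length (hG.path r w)
      rw [length_path, hdv] at hv1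
      rw [length_path, hdw] at hw1
      rw [← hv1, ← hw1]
      exact hsnd
    have hsnd_par : ∀ {x}, G.dist r x = d + 2 →
        (hG.path r (hG.path r x).penultimate).snd = (hG.path r x).snd := fun hx =>
      hG.snd_path_getVert r _ (by rw [length_path, hx]; omega)
    have hdist_par : ∀ {x}, G.dist r x = d + 2 → G.dist r (hG.path r x).penultimate = d + 1 :=
      fun hx => by rw [dist_penultimate_path, hx]; rfl
    have hdu := hdist_par hdv
    set u := (hG.path r v).penultimate
    have hur : u ≠ r := fun h => by rw [h, dist_self] at hdu; omega
    have huw : (hG.path r w).penultimate = u :=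
      ih (d + 1) (by omega) (fun h => by have := hdist_par hdw; rw [h, dist_self] at this; omega)
        hur (by rw [hsnd_par hdv, hsnd_par hdw, hsnd]) (hdist_par hdw) hdu
    by_contra hvw
    set q := (hG.path r u).penultimate
    have hdq : G.dist r q = d := by rw [dist_penultimate_path, hdu]; rfl
    have hav : G.Adj u v := hG.adj_penultimate_path r hv
    have haw : G.Adj u w := huw ▸ hG.adj_penultimate_path r hw
    have haq : G.Adj u q := (hG.adj_penultimate_path r hur).symm
    have : 2 < (G.neighborSet u).ncard :=
      (Set.two_lt_ncard (Set.toFinite _)).mpr ⟨v, hav, w, haw, q, haq, hvw,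
        fun h => by rw [h] at hdv; omega, fun h => by rw [h] at hdw; omega⟩
    exact absurd (h2 u hur) (by omega)

section Arms

variable [Fintype V]

theorem exists_armTip (x : V) : ∃ t, (t = r ∨ t ≠ r ∧ (hG.path r t).snd = x) ∧
    ∀ v, v ≠ r → (hG.path r v).snd = x → G.dist r v ≤ G.dist r t := by
  by_cases hS : (Finset.univ.filter fun v => v ≠ r ∧ (hG.path r v).snd = x).Nonempty
  · obtain ⟨t, ht, hmax⟩ := Finset.exists_max_image _ (G.dist r) hS
    simp only [Finset.mem_filter, Finset.mem_univ, true_and] at ht hmax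
    exact ⟨t, Or.inr ht, fun v hv hvx => hmax v ⟨hv, hvx⟩⟩
  · simp only [Finset.not_nonempty_iff_eq_empty, Finset.filter_eq_empty_iff, Finset.mem_univ,
      true_implies, not_and] at hS
    exact ⟨r, Or.inl rfl, fun v hv hvx => absurd hvx (hS hv)⟩

/-- The far end of the arm starting at `x`, or `r` if `x` is not a neighbour of `r`. -/
noncomputable def armTip (x : V) : V := (hG.exists_armTip r x).choose

theorem dist_le_dist_armTip {v : V} (hv : v ≠ r) :
    G.dist r v ≤ G.dist r (hG.armTip r (hG.path r v).snd) :=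
  (hG.exists_armTip r _).choose_spec.2 v hv rfl

theorem dist_getVert_armTip {x : V} {c : ℕ} (hc : c ≤ G.dist r (hG.armTip r x)) :
    G.dist r ((hG.path r (hG.armTip r x)).getVert c) = c := by
  rw [dist_getVert_path, Nat.min_eq_left hc]

theorem snd_getVert_armTip {x : V} {c : ℕ} (hc : 0 < c) (hcl : c ≤ G.dist r (hG.armTip r x)) :
    (hG.path r ((hG.path r (hG.armTip r x)).getVert c)).snd = x := by
  rw [snd_path_getVert _ _ _ hc]
  refine ((hG.exists_armTip r x).choose_spec.1.resolve_left fun h => ?_).2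
  rw [armTip, h, dist_self] at hcl
  omega

theorem getVert_armTip_dist (h2 : ∀ v, v ≠ r → (G.neighborSet v).ncard ≤ 2) {v : V}
    (hv : v ≠ r) : (hG.path r (hG.armTip r (hG.path r v).snd)).getVert (G.dist r v) = v := by
  have hle := hG.dist_le_dist_armTip r hv
  have hpos : 0 < G.dist r v := hG.connected.pos_dist_of_ne hv.symm
  refine hG.eq_of_snd_path_eq r h2 _ (fun h => ?_) hv (hG.snd_getVert_armTip r hpos hle)
    (hG.dist_getVert_armTip r hle) rfl
  have := hG.dist_getVert_armTip r hle
  rw [h, dist_self] at this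
  omega

theorem getVert_armTip_succ_of_penultimate (h2 : ∀ v, v ≠ r → (G.neighborSet v).ncard ≤ 2)
    {x w : V} {c : ℕ} (hc : 0 < c) (hcl : c ≤ G.dist r (hG.armTip r x))
    (hw : (hG.path r w).penultimate = (hG.path r (hG.armTip r x)).getVert c) :
    c < G.dist r (hG.armTip r x) ∧ w = (hG.path r (hG.armTip r x)).getVert (c + 1) := by
  have hdu := hG.dist_getVert_armTip r hcl
  rw [← hw] at hdu
  have hwr : w ≠ r := fun h => by
    rw [h, Walk.penultimate, length_path, dist_self, Nat.zero_sub, Walk.getVert_zero,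
      dist_self] at hdu
    omega
  have hdw : G.dist r w = c + 1 := by
    have := hG.dist_penultimate_path r w
    have := hG.connected.pos_dist_of_ne hwr.symm
    omega
  have hsnd : (hG.path r w).snd = x := by
    rw [← hG.snd_path_getVert r w (j := (hG.path r w).length - 1) (by rw [length_path]; omega),
      ← Walk.penultimate, hw]
    exact hG.snd_getVert_armTip r hc hcl
  have hle := hG.dist_le_dist_armTip r hwr
  have hget := hG.getVert_armTip_dist r h2 hwr
  rw [hsnd, hdw] at hle hget
  exact ⟨hle, hget.symm⟩

/-- Arm `i` is the arm starting at the `i`-th vertex of an enumeration of `V`; arms starting at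
non-neighbours of `r` are empty. -/
noncomputable def armLabel (i : ℕ) : V :=
  if h : i < Fintype.card V then (Fintype.equivFin V).symm ⟨i, h⟩ else r

theorem armLabel_injOn {i j : ℕ} (hi : i < Fintype.card V) (hj : j < Fintype.card V)
    (h : armLabel r i = armLabel r j) : i = j := by
  simp only [armLabel, dif_pos hi, dif_pos hj, Equiv.apply_eq_iff_eq, Fin.mk.injEq] at h
  exact h

theorem armLabel_equivFin (x : V) : armLabel r (Fintype.equivFin V x) = x := by
  simp [armLabel]

noncomputable def spiderArms (h2 : ∀ v, v ≠ r → (G.neighborSet v).ncard ≤ 2) :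
    SpiderArms G r where
  k := Fintype.card V
  len i := G.dist r (hG.armTip r (armLabel r i))
  vtx i c := (hG.path r (hG.armTip r (armLabel r i))).getVert c
  vtx_zero i := Walk.getVert_zero _
  adj_vtx_succ _ hc := Walk.adj_getVert_succ _ (by rwa [length_path])
  eq_of_vtx_eq {i j c c'} hi hj hc hc' h := by
    have hcc' : c = c' := by
      rw [← hG.dist_getVert_armTip r hc, h, hG.dist_getVert_armTip r hc']
    subst hcc'
    refine ⟨rfl, (Nat.eq_zero_or_pos c).imp_right fun hpos => armLabel_injOn r hi hj ?_⟩
    rw [← hG.snd_getVert_armTip r hpos hc, h, hG.snd_getVert_armTip r hpos hc']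
  exists_vtx v hv := by
    refine ⟨_, (Fintype.equivFin V (hG.path r v).snd).isLt, G.dist r v,
      hG.connected.pos_dist_of_ne hv.symm, ?_, ?_⟩
    · rw [armLabel_equivFin]
      exact hG.dist_le_dist_armTip r hv
    · rw [armLabel_equivFin]
      exact hG.getVert_armTip_dist r h2 hv
  eq_vtx_of_adj hi hc hcl h := by
    rcases hG.eq_penultimate_or_eq_penultimate r h with rfl | hwu
    · exact Or.inl (hG.penultimate_path_getVert r _ hcl)
    · exact Or.inr (hG.getVert_armTip_succ_of_penultimate r h2 hc hcl hwu.symm)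

end Arms

end SimpleGraph.IsTree

theorem SimpleGraph.ncard_neighborSet_lt_card {V : Type*} [Fintype V] (G : SimpleGraph V)
    (v : V) : (G.neighborSet v).ncard < Fintype.card V := by
  rw [← Nat.card_eq_fintype_card, ← Set.ncard_univ]
  exact Set.ncard_lt_ncard (Set.ssubset_univ_iff.mpr fun h =>
    G.irrefl (h ▸ Set.mem_univ v : v ∈ G.neighborSet v))

theorem SimpleGraph.IsTree.iotaNum_le_four_mul_sqrt {V : Type*} [Fintype V] {G : SimpleGraph V}
    (hG : G.IsTree) {r : V} (h3 : 3 ≤ (G.neighborSet r).ncard)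
    (h2 : ∀ v, v ≠ r → (G.neighborSet v).ncard ≤ 2) :
    iotaNum G ≤ 4 * Nat.sqrt (Fintype.card V) := by
  set n := Fintype.card V
  set s := Nat.sqrt n
  have hs : 2 ≤ s := Nat.le_sqrt.mpr (by have := G.ncard_neighborSet_lt_card r; omega)
  have hns : n < (s + 1) * (s + 1) := Nat.lt_succ_sqrt n
  let A := hG.spiderArms r h2
  have hA : tripStart A.len A.k < 2 * n := Nat.mul_lt_mul_of_pos_left A.sum_len_lt_card two_pos
  exact Nat.sInf_le (A.canDecon (δ := s + 1) (by omega) (by omega) (by nlinarith))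

theorem SimpleGraph.IsTree.iotaNum_le_four_mul_real_sqrt {V : Type*} [Fintype V]
    {G : SimpleGraph V} (hG : G.IsTree) {r : V} (h3 : 3 ≤ (G.neighborSet r).ncard)
    (h2 : ∀ v, v ≠ r → (G.neighborSet v).ncard ≤ 2) :
    (iotaNum G : ℝ) ≤ 4 * Real.sqrt (Fintype.card V) :=
  calc (iotaNum G : ℝ) ≤ ((4 * Nat.sqrt (Fintype.card V) : ℕ) : ℝ) := by
        exact_mod_cast hG.iotaNum_le_four_mul_sqrt h3 h2
    _ ≤ 4 * Real.sqrt (Fintype.card V) := by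
        push_cast
        gcongr
        exact Real.nat_sqrt_le_real_sqrt

/-- Any spider `S` on `n` vertices has immunity number `O(√n)`;
in particular `ι(S) ≤ 4√n` when the root degree is at most `√n`. -/
theorem immunity_spider_sqrt :
    (∃ C : ℝ, 0 < C ∧
      ∀ (V : Type) (_ : Fintype V) (G : SimpleGraph V) (r : V),
        G.IsTree → 3 ≤ (G.neighborSet r).ncard →
        (∀ v, v ≠ r → (G.neighborSet v).ncard ≤ 2) →
        (iotaNum G : ℝ) ≤ C * Real.sqrt (Fintype.card V)) ∧
    ∀ (V : Type) (_ : Fintype V) (G : SimpleGraph V) (r : V),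
      G.IsTree → 3 ≤ (G.neighborSet r).ncard →
      (∀ v, v ≠ r → (G.neighborSet v).ncard ≤ 2) →
      ((G.neighborSet r).ncard : ℝ) ≤ Real.sqrt (Fintype.card V) →
      (iotaNum G : ℝ) ≤ 4 * Real.sqrt (Fintype.card V) := by
  exact ⟨⟨4, by norm_num, fun V _ G r hG h3 h2 => hG.iotaNum_le_four_mul_real_sqrt h3 h2⟩,
    fun V _ G r hG h3 h2 _ => hG.iotaNum_le_four_mul_real_sqrt h3 h2⟩
end

section
/- Any rooted tree T of height h can be fully decontaminated by one agent with temporal immunity τ = 2h − 1, via the monotone strategy that starts at the root and visits each leaf in depth-first discovery order, returning to the root between consecutive leaves; moreover no vertex, once decontaminated, is ever recontaminated. -/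
open scoped Classical

/-!
List the vertices in depth-first order, i.e. lexicographically by their paths from the root, and
let the agent walk from the root to each of them and back in turn. A vertex `u` with a contaminated
neighbour `w` is a parent of `w`, and every vertex listed between `u` and `w` is a descendant of
`u`, so the agent passes through `u` on each of these round trips, once going down and once coming
back up. As no vertex is deeper than `h`, at most `2h - 1` time units pass between two consecutive
passes, so by induction on time no visited vertex is ever recontaminated: the contaminated vertices
are exactly the unvisited ones.
-/

open SimpleGraph

namespace List

theorem IsPrefix.of_le_of_le {α : Type*} [LinearOrder α] {p x y : List α} (hpy : p <+: y)
    (hpx : p ≤ x) (hxy : x ≤ y) : p <+: x := by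
  induction p generalizing x y with
  | nil => exact nil_prefix
  | cons a p ih =>
    obtain ⟨t, rfl⟩ := hpy
    cases x with
    | nil => exact absurd hpx (not_le.mpr (nil_lt_cons a p))
    | cons b x =>
      rw [← not_lt, cons_lt_cons_iff, not_or, not_and] at hpx
      rw [← not_lt, cons_append, cons_lt_cons_iff, not_or, not_and] at hxy
      obtain rfl : a = b := le_antisymm (not_lt.mp hpx.1) (not_lt.mp hxy.1)
      exact cons_prefix_cons.mpr
        ⟨rfl, ih ⟨t, rfl⟩ (not_lt.mp (hpx.2 rfl)) (not_lt.mp (hxy.2 rfl))⟩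

end List

theorem Nat.exists_le_lt_succ {f : ℕ → ℕ} {n t : ℕ} (h0 : f 0 ≤ t) (hn : t < f n) :
    ∃ i < n, f i ≤ t ∧ t < f (i + 1) := by
  induction n with
  | zero => omega
  | succ n ih =>
    by_cases h : f n ≤ t
    · exact ⟨n, n.lt_succ_self, h, hn⟩
    · obtain ⟨i, hi, hfi⟩ := ih (not_le.mp h)
      exact ⟨i, hi.trans n.lt_succ_self, hfi⟩

section Decontamination

variable {V : Type*}

def Visited (agent : ℕ → V) (t : ℕ) (v : V) : Prop := ∃ s ≤ t, agent s = v

theorem visited_succ {agent : ℕ → V} {t : ℕ} {v : V} :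
    Visited agent (t + 1) v ↔ Visited agent t v ∨ agent (t + 1) = v := by
  refine ⟨fun ⟨s, hs, hsv⟩ => ?_, ?_⟩
  · rcases Nat.le_succ_iff.mp hs with hs | rfl
    exacts [.inl ⟨s, hs, hsv⟩, .inr hsv]
  · rintro (⟨s, hs, hsv⟩ | hv)
    exacts [⟨s, hs.trans t.le_succ, hsv⟩, ⟨t + 1, le_rfl, hv⟩]

theorem Visited.mono {agent : ℕ → V} {t t' : ℕ} {v : V} (hv : Visited agent t v)
    (h : t ≤ t') : Visited agent t' v :=
  let ⟨s, hs, hsv⟩ := hv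
  ⟨s, hs.trans h, hsv⟩

def RevisitsFrontierWithin (G : SimpleGraph V) (τ : ℕ) (agent : ℕ → V) : Prop :=
  ∀ t v w, G.Adj v w → Visited agent t v → ¬ Visited agent (t + 1) w →
    ∃ s ≤ t + 1, t + 1 ≤ s + τ ∧ agent s = v

variable {G : SimpleGraph V} {τ : ℕ} {agent : ℕ → V}

theorem deconState_invariant (hrev : RevisitsFrontierWithin G τ agent) (t : ℕ) :
    (∀ v, (deconState G τ agent t).1 v ↔ ¬ Visited agent t v) ∧
      ∀ v s, s ≤ t → agent s = v → (deconState G τ agent t).2 v ≤ t - s := by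
  induction t with
  | zero =>
    refine ⟨fun v => ?_, fun v s _ _ => by simp [deconState]⟩
    simp [deconState, Visited, eq_comm]
  | succ t ih =>
    obtain ⟨ihC, ihX⟩ := ih
    have hC' (w : V) : ((deconState G τ agent t).1 w ∧ w ≠ agent (t + 1)) ↔
        ¬ Visited agent (t + 1) w := by
      rw [ihC, visited_succ, not_or, ne_comm]
    have visit_before {v s} (hs : s ≤ t + 1) (hsv : agent s = v) (hv : v ≠ agent (t + 1)) :
        s ≤ t :=
      Nat.le_of_lt_succ (hs.lt_of_ne fun h => hv (h ▸ hsv).symm)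
    -- by `hrev`, a vertex with a contaminated neighbour was visited less than `τ` units ago
    have no_recontamination (v : V) :
        ¬ (v ≠ agent (t + 1) ∧ ¬ (deconState G τ agent t).1 v ∧
        (∃ w, G.Adj v w ∧ ((deconState G τ agent t).1 w ∧ w ≠ agent (t + 1))) ∧
        τ ≤ (deconState G τ agent t).2 v) := by
      rintro ⟨hvp, hvC, ⟨w, hadj, hw⟩, hX⟩
      rw [ihC, not_not] at hvC
      obtain ⟨s, hs, hts, hsv⟩ := hrev t v w hadj hvC ((hC' w).mp hw)
      have hst := visit_before hs hsv hvp
      have := ihX v s hst hsv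
      omega
    refine ⟨fun v => ?_, fun v s hs hsv => ?_⟩
    · simp only [deconState]
      rw [or_iff_left (no_recontamination v), hC']
    · simp only [deconState]
      split_ifs with h
      · exact Nat.zero_le _
      · have hst := visit_before hs hsv (not_or.mp h).1
        have := ihX v s hst hsv
        omega

theorem monotoneStrategy_of_revisitsFrontierWithin (hrev : RevisitsFrontierWithin G τ agent) :
    MonotoneStrategy G τ agent := by
  intro t v hv
  rw [(deconState_invariant hrev t).1, not_not] at hv
  rw [(deconState_invariant hrev (t + 1)).1, not_not]
  exact hv.mono t.le_succ

theorem cleanAt_of_revisitsFrontierWithin (hrev : RevisitsFrontierWithin G τ agent) {T : ℕ}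
    (hvis : ∀ v, Visited agent T v) : CleanAt G τ agent T := fun v => by
  rw [(deconState_invariant hrev T).1, not_not]
  exact hvis v

end Decontamination

namespace SimpleGraph

theorem Walk.dist_getVert_le {V : Type*} {G : SimpleGraph V} {u v : V} (p : G.Walk u v)
    (n : ℕ) : G.dist u (p.getVert n) ≤ n :=
  (dist_le (p.take n)).trans (by simp)

theorem Walk.isWalkStrategy_getVert {V : Type*} {G : SimpleGraph V} {u v : V} (p : G.Walk u v) :
    IsWalkStrategy G p.getVert := by
  intro t
  rcases Nat.lt_or_ge t p.length with hlt | hge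
  · exact .inr (p.adj_getVert_succ hlt)
  · exact .inl (by rw [p.getVert_of_length_le hge, p.getVert_of_length_le (hge.trans t.le_succ)])

namespace IsTree

variable {V : Type*} {G : SimpleGraph V} (hT : G.IsTree) (r : V)

noncomputable def rootPath (v : V) : G.Walk r v :=
  (hT.connected.exists_walk_length_eq_dist r v).choose

theorem length_rootPath (v : V) : (hT.rootPath r v).length = G.dist r v :=
  (hT.connected.exists_walk_length_eq_dist r v).choose_spec

theorem isPath_rootPath (v : V) : (hT.rootPath r v).IsPath :=
  Walk.isPath_of_length_eq_dist _ (hT.length_rootPath r v)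

theorem eq_rootPath {v : V} {p : G.Walk r v} (hp : p.IsPath) : p = hT.rootPath r v :=
  congrArg Subtype.val ((hT.isAcyclic.subsingleton_path r v).elim ⟨p, hp⟩
    ⟨_, hT.isPath_rootPath r v⟩)

def IsAncestor (u v : V) : Prop := u ∈ (hT.rootPath r v).support

theorem support_rootPath_injective : Function.Injective fun v => (hT.rootPath r v).support := by
  intro u v h
  rw [← (hT.rootPath r u).getLast_support, ← (hT.rootPath r v).getLast_support]
  simp only [h]

variable {hT r}

theorem rootPath_eq_append {u v : V} (huv : hT.IsAncestor r u v) :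
    hT.rootPath r v = (hT.rootPath r u).append ((hT.rootPath r v).dropUntil u huv) := by
  conv_lhs => rw [← (hT.rootPath r v).take_spec huv]
  rw [hT.eq_rootPath r ((hT.isPath_rootPath r v).takeUntil huv)]

theorem isAncestor_iff_support_prefix {u v : V} :
    hT.IsAncestor r u v ↔ (hT.rootPath r u).support <+: (hT.rootPath r v).support := by
  refine ⟨fun huv => ?_, fun h => h.subset (Walk.end_mem_support _)⟩
  rw [rootPath_eq_append huv, Walk.support_append]
  exact List.prefix_append _ _

theorem IsAncestor.refl (v : V) : hT.IsAncestor r v v := Walk.end_mem_support _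

theorem IsAncestor.trans {u v w : V} (huv : hT.IsAncestor r u v) (hvw : hT.IsAncestor r v w) :
    hT.IsAncestor r u w :=
  isAncestor_iff_support_prefix.mp hvw |>.subset huv

theorem IsAncestor.dist_le {u v : V} (huv : hT.IsAncestor r u v) : G.dist r u ≤ G.dist r v := by
  have := (isAncestor_iff_support_prefix.mp huv).length_le
  simpa [Walk.length_support, length_rootPath] using this

theorem IsAncestor.dist_lt {u v : V} (huv : hT.IsAncestor r u v) (hne : u ≠ v) :
    G.dist r u < G.dist r v := by
  refine huv.dist_le.lt_of_ne fun hd => hne (support_rootPath_injective hT r ?_)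
  exact (isAncestor_iff_support_prefix.mp huv).eq_of_length (by simp [length_rootPath, hd])

theorem getVert_rootPath_dist {u v : V} (huv : hT.IsAncestor r u v) :
    (hT.rootPath r v).getVert (G.dist r u) = u := by
  rw [rootPath_eq_append huv, Walk.getVert_append', length_rootPath, if_pos le_rfl,
    ← hT.length_rootPath r u, Walk.getVert_length]

theorem isAncestor_or_isAncestor_of_adj {u w : V} (hadj : G.Adj u w) :
    hT.IsAncestor r u w ∨ hT.IsAncestor r w u := by
  by_contra! h
  exact h.2 (hT.isAcyclic.mem_support_of_ne_mem_support_of_adj_of_isPath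
    (hT.isPath_rootPath r u) (hT.isPath_rootPath r w) hadj h.1)

variable (hT r)

noncomputable def roundTrip (v : V) : G.Walk r r :=
  (hT.rootPath r v).append (hT.rootPath r v).reverse

variable {hT r}

theorem length_roundTrip (v : V) : (hT.roundTrip r v).length = 2 * G.dist r v := by
  rw [roundTrip, Walk.length_append, Walk.length_reverse, length_rootPath]
  omega

theorem getVert_roundTrip_dist {u v : V} (huv : hT.IsAncestor r u v) :
    (hT.roundTrip r v).getVert (G.dist r u) = u := by
  rw [roundTrip, Walk.getVert_append', length_rootPath, if_pos huv.dist_le,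
    getVert_rootPath_dist huv]

theorem getVert_roundTrip_two_mul_sub {u v : V} (huv : hT.IsAncestor r u v) :
    (hT.roundTrip r v).getVert (2 * G.dist r v - G.dist r u) = u := by
  have := huv.dist_le
  have hidx : G.dist r v - (2 * G.dist r v - G.dist r u - G.dist r v) = G.dist r u := by omega
  rw [roundTrip, Walk.getVert_append, length_rootPath, if_neg (by omega), Walk.getVert_reverse,
    length_rootPath, hidx, getVert_rootPath_dist huv]

theorem isAncestor_of_mem_support_roundTrip {u v : V} (hu : u ∈ (hT.roundTrip r v).support) :
    hT.IsAncestor r u v := by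
  rwa [roundTrip, Walk.mem_support_append_iff, Walk.support_reverse, List.mem_reverse,
    or_self] at hu

variable (hT r)

noncomputable def tour : List V → G.Walk r r
  | [] => .nil
  | v :: l => (hT.roundTrip r v).append (tour l)

noncomputable def tripStart (l : List V) (i : ℕ) : ℕ := (hT.tour r (l.take i)).length

theorem tour_append (l₁ l₂ : List V) :
    hT.tour r (l₁ ++ l₂) = (hT.tour r l₁).append (hT.tour r l₂) := by
  induction l₁ with
  | nil => rfl
  | cons v l ih => rw [List.cons_append, tour, tour, ih, Walk.append_assoc]

theorem tripStart_length (l : List V) : hT.tripStart r l l.length = (hT.tour r l).length := by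
  rw [tripStart, List.take_length]

theorem tripStart_mono (l : List V) : Monotone (hT.tripStart r l) := by
  intro i j hij
  rw [tripStart, tripStart, ← Nat.add_sub_cancel' hij, List.take_add, hT.tour_append r,
    Walk.length_append]
  exact Nat.le_add_right _ _

theorem tripStart_succ (l : List V) (i : ℕ) (hi : i < l.length) :
    hT.tripStart r l (i + 1) = hT.tripStart r l i + 2 * G.dist r l[i] := by
  rw [tripStart, tripStart, List.take_add_one, List.getElem?_eq_getElem hi, Option.toList_some,
    hT.tour_append r, Walk.length_append, tour, tour, Walk.append_nil, length_roundTrip]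

theorem getVert_tour (l : List V) {i j : ℕ} (hi : i < l.length) (hj : j ≤ 2 * G.dist r l[i]) :
    (hT.tour r l).getVert (hT.tripStart r l i + j) = (hT.roundTrip r l[i]).getVert j := by
  have hsplit : hT.tour r l = (hT.tour r (l.take i)).append
      ((hT.roundTrip r l[i]).append (hT.tour r (l.drop (i + 1)))) := by
    conv_lhs =>
      rw [← List.take_append_drop i l, List.drop_eq_getElem_cons hi, hT.tour_append r, tour]
  rw [tripStart, hsplit, Walk.getVert_append, if_neg (by omega), Nat.add_sub_cancel_left,
    Walk.getVert_append', length_roundTrip, if_pos hj]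

variable {hT r}

theorem exists_tripStart_le_lt {l : List V} {s : ℕ} (hs : s < (hT.tour r l).length) :
    ∃ i < l.length, hT.tripStart r l i ≤ s ∧ s < hT.tripStart r l (i + 1) :=
  Nat.exists_le_lt_succ (Nat.zero_le s) (hT.tripStart_length r l ▸ hs)

theorem getVert_tour_tripStart_add_dist {l : List V} {i : ℕ} (hi : i < l.length) {u : V}
    (hu : hT.IsAncestor r u l[i]) :
    (hT.tour r l).getVert (hT.tripStart r l i + G.dist r u) = u := by
  have := hu.dist_le
  rw [hT.getVert_tour r l hi (by omega), getVert_roundTrip_dist hu]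

theorem getVert_tour_tripStart_succ_sub_dist {l : List V} {i : ℕ} (hi : i < l.length) {u : V}
    (hu : hT.IsAncestor r u l[i]) :
    (hT.tour r l).getVert (hT.tripStart r l (i + 1) - G.dist r u) = u := by
  have := hu.dist_le
  rw [hT.tripStart_succ r l i hi, Nat.add_sub_assoc (by omega), hT.getVert_tour r l hi (by omega),
    getVert_roundTrip_two_mul_sub hu]

theorem exists_isAncestor_of_getVert_tour {l : List V} {s : ℕ} (hs : s < (hT.tour r l).length)
    {u : V} (hu : (hT.tour r l).getVert s = u) :
    ∃ i, ∃ hi : i < l.length, hT.tripStart r l i + G.dist r u ≤ s ∧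
      s < hT.tripStart r l (i + 1) ∧ hT.IsAncestor r u l[i] := by
  obtain ⟨i, hi, hle, hlt⟩ := exists_tripStart_le_lt hs
  have hj : s - hT.tripStart r l i ≤ 2 * G.dist r l[i] := by
    rw [hT.tripStart_succ r l i hi] at hlt
    omega
  have htrip : (hT.roundTrip r l[i]).getVert (s - hT.tripStart r l i) = u := by
    rw [← hT.getVert_tour r l hi hj, Nat.add_sub_cancel' hle, hu]
  refine ⟨i, hi, ?_, hlt, isAncestor_of_mem_support_roundTrip ?_⟩
  · have := htrip ▸ (hT.roundTrip r l[i]).dist_getVert_le (s - hT.tripStart r l i)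
    omega
  · exact Walk.mem_support_iff_exists_getVert.mpr ⟨_, htrip, by rwa [length_roundTrip]⟩

theorem tripStart_add_dist_le_length {l : List V} {i : ℕ} (hi : i < l.length) :
    hT.tripStart r l i + G.dist r l[i] ≤ (hT.tour r l).length := by
  have := hT.tripStart_mono r l (show i + 1 ≤ l.length from hi)
  rw [hT.tripStart_succ r l i hi, hT.tripStart_length r] at this
  omega

theorem exists_recent_visit_of_tripStart_add_dist_le {l : List V} {i : ℕ} (hi : i < l.length)
    {u : V} (hu : hT.IsAncestor r u l[i]) {h t : ℕ} (hh : G.dist r l[i] ≤ h)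
    (hle : hT.tripStart r l i + G.dist r u ≤ t) (hlt : t < hT.tripStart r l (i + 1)) :
    ∃ s ≤ t, t ≤ s + (2 * h - 1) ∧ (hT.tour r l).getVert s = u := by
  have := hu.dist_le
  have := hT.tripStart_succ r l i hi
  by_cases hup : hT.tripStart r l (i + 1) - G.dist r u ≤ t
  · exact ⟨_, hup, by omega, getVert_tour_tripStart_succ_sub_dist hi hu⟩
  · exact ⟨_, hle, by omega, getVert_tour_tripStart_add_dist hi hu⟩

theorem exists_recent_visit_of_lt_tripStart_succ_add_dist {l : List V} {i : ℕ}
    (hi : i < l.length) {u : V} (hu : hT.IsAncestor r u l[i]) {h t : ℕ} (hh : G.dist r u ≤ h)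
    (hle : hT.tripStart r l (i + 1) ≤ t) (hlt : t < hT.tripStart r l (i + 1) + G.dist r u) :
    ∃ s ≤ t, t ≤ s + (2 * h - 1) ∧ (hT.tour r l).getVert s = u := by
  have := hu.dist_le
  have := hT.tripStart_succ r l i hi
  exact ⟨_, by omega, by omega, getVert_tour_tripStart_succ_sub_dist hi hu⟩

variable (hT r) in
structure IsPreorderTraversal (l : List V) : Prop where
  mem : ∀ v, v ∈ l
  le_of_isAncestor {i j : ℕ} (hi : i < l.length) (hj : j < l.length) :
    hT.IsAncestor r l[i] l[j] → i ≤ j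
  isAncestor_of_le_of_le {i j k : ℕ} (hi : i < l.length) (hj : j < l.length)
    (hk : k < l.length) :
    i ≤ j → j ≤ k → hT.IsAncestor r l[i] l[k] → hT.IsAncestor r l[i] l[j]

variable (hT r) in
/-- Sorting the vertices lexicographically by their root paths lists them in depth-first order. -/
theorem exists_isPreorderTraversal [Fintype V] : ∃ l, hT.IsPreorderTraversal r l := by
  let key (v : V) : List (Fin (Fintype.card V)) :=
    (hT.rootPath r v).support.map (Fintype.equivFin V)
  have isAncestor_iff {u v : V} : hT.IsAncestor r u v ↔ key u <+: key v := by
    refine ⟨fun h => (isAncestor_iff_support_prefix.mp h).map _, fun h => ?_⟩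
    exact (List.mem_map_of_injective (Fintype.equivFin V).injective).mp
      (h.subset (List.mem_map_of_mem (Walk.end_mem_support _)))
  have key_injective : key.Injective :=
    (List.map_injective_iff.mpr (Fintype.equivFin V).injective).comp
      (support_rootPath_injective hT r)
  let _ : LinearOrder V := LinearOrder.lift' key key_injective
  have hsort := Finset.sortedLT_sort (Finset.univ : Finset V)
  refine ⟨Finset.univ.sort (· ≤ ·), fun v => by simp, fun hi hj hij => ?_,
    fun hi hj hk hij hjk hik => ?_⟩
  · exact hsort.getElem_le_getElem_iff.mp (not_lt.mp (isAncestor_iff.mp hij).le)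
  · exact isAncestor_iff.mpr ((isAncestor_iff.mp hik).of_le_of_le
      (hsort.getElem_le_getElem_iff.mpr hij) (hsort.getElem_le_getElem_iff.mpr hjk))

theorem revisitsFrontierWithin_tour {l : List V} (hl : hT.IsPreorderTraversal r l) {h : ℕ}
    (hh : ∀ v, G.dist r v ≤ h) :
    RevisitsFrontierWithin G (2 * h - 1) (hT.tour r l).getVert := by
  rintro t u w hadj ⟨s₀, hs₀, hu⟩ hw
  obtain ⟨a, ha, rfl⟩ := List.getElem_of_mem (hl.mem u)
  obtain ⟨b, hb, rfl⟩ := List.getElem_of_mem (hl.mem w)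
  have hw_late : t + 1 < hT.tripStart r l b + G.dist r l[b] := by
    by_contra! hle
    exact hw ⟨_, hle, getVert_tour_tripStart_add_dist hb (.refl _)⟩
  have hw_end : hT.tripStart r l b + G.dist r l[b] ≤ hT.tripStart r l (b + 1) := by
    rw [hT.tripStart_succ r l b hb]
    omega
  have ht_len : t + 1 < (hT.tour r l).length := hw_late.trans_le (tripStart_add_dist_le_length hb)
  obtain ⟨i, hi, hTi, hTi'⟩ := exists_tripStart_le_lt ht_len
  obtain ⟨i₀, hi₀, hTi₀, hTi₀', hu₀⟩ :=
    exists_isAncestor_of_getVert_tour (s := s₀) (by omega) hu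
  have hib : i ≤ b :=
    Nat.le_of_lt_add_one ((hT.tripStart_mono r l).reflect_lt (b := b + 1) (by omega))
  have hi₀i : i₀ ≤ i :=
    Nat.le_of_lt_add_one ((hT.tripStart_mono r l).reflect_lt (b := i + 1) (by omega))
  have hai₀ : a ≤ i₀ := hl.le_of_isAncestor ha hi₀ hu₀
  -- `w` is a child of `u`: a parent of `u` would have been visited on the way down to `u`
  have huw : hT.IsAncestor r l[a] l[b] := by
    refine (isAncestor_or_isAncestor_of_adj hadj).resolve_right fun hwu => ?_
    have := hwu.dist_lt hadj.ne.symm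
    exact hw ⟨_, by omega, getVert_tour_tripStart_add_dist hi₀ (hwu.trans hu₀)⟩
  have isAncestor_between {j : ℕ} (hj : j < l.length) (haj : a ≤ j) (hjb : j ≤ b) :
      hT.IsAncestor r l[a] l[j] :=
    hl.isAncestor_of_le_of_le ha hj hb haj hjb huw
  by_cases hdesc : hT.tripStart r l i + G.dist r l[a] ≤ t + 1
  · exact exists_recent_visit_of_tripStart_add_dist_le hi
      (isAncestor_between hi (by omega) hib) (hh _) hdesc hTi'
  · have hi₀i' : i₀ ≠ i := by
      rintro rfl
      omega
    obtain ⟨j, rfl⟩ : ∃ j, i = j + 1 := Nat.exists_eq_add_one.mpr (by omega)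
    exact exists_recent_visit_of_lt_tripStart_succ_add_dist (by omega)
      (isAncestor_between (by omega) (by omega) (by omega)) (hh _) hTi (by omega)

theorem visited_tour {l : List V} (hl : hT.IsPreorderTraversal r l) (v : V) :
    Visited (hT.tour r l).getVert (hT.tour r l).length v := by
  obtain ⟨i, hi, rfl⟩ := List.getElem_of_mem (hl.mem v)
  exact ⟨_, tripStart_add_dist_le_length hi, getVert_tour_tripStart_add_dist hi (.refl _)⟩

end IsTree

end SimpleGraph

/-- Any rooted tree of height `h` can be fully decontaminated by
one agent with temporal immunity `2h - 1`, starting at the root, via a monotone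
strategy (no decontaminated vertex is ever recontaminated). -/
theorem decon_rooted_tree {V : Type*} [Fintype V] (G : SimpleGraph V) (r : V)
    (h : ℕ) (htree : G.IsTree) (hh : ∀ v, G.dist r v ≤ h) :
    ∃ agent : ℕ → V, agent 0 = r ∧ IsWalkStrategy G agent ∧
      MonotoneStrategy G (2 * h - 1) agent ∧
      ∃ T, CleanAt G (2 * h - 1) agent T := by
  obtain ⟨l, hl⟩ := htree.exists_isPreorderTraversal r
  have hrev := htree.revisitsFrontierWithin_tour hl hh
  exact ⟨_, Walk.getVert_zero _, Walk.isWalkStrategy_getVert _,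
    monotoneStrategy_of_revisitsFrontierWithin hrev, _,
    cleanAt_of_revisitsFrontierWithin hrev (htree.visited_tour hl)⟩
end

section
/- Let G be a √n × √n mesh. For every subset W of the vertex set with |W| = n/2, the bipartite graph of edges between W and its complement contains a matching of size at least √n. -/
open scoped Classical

/-!
By Hall's theorem with deficiency `#W - k`, it suffices that every `s ⊆ W` with more than
`#W - k` elements has at least `#s - (#W - k)` neighbours outside `W`. Otherwise `s` and the
non-neighbours of `s` outside `W` are two vertex sets of size more than `(k - 1)² / 2`, with no
edge between them, separated by a set `Z` of fewer than `k` vertices. Such a `Z` misses a whole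
row and a whole column; being paths, these lie entirely on one side, say `X`. Each `y` of the
other side `Y` then has a vertex of `Z` on its row between `y` and the free column, and one on
its column between `y` and the free row. This pair of vertices of `Z` determines `y`, and never
arises in the reverse order from another point of `Y`, so `2 * #Y ≤ #Z ^ 2 ≤ (k - 1) ^ 2`.
-/

open Finset SimpleGraph

theorem Nat.exists_between_of_forall_not_succ {P Q : ℕ → Prop} (hPQ : ∀ t, P t → ¬ Q (t + 1))
    {a b : ℕ} (hab : a < b) (ha : P a) (hb : Q b) : ∃ t, a < t ∧ t < b ∧ ¬ P t ∧ ¬ Q t := by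
  induction b with
  | zero => omega
  | succ b ih =>
    by_cases hPb : P b
    · exact absurd hb (hPQ b hPb)
    obtain rfl | hab := (Nat.lt_succ_iff.mp hab).eq_or_lt
    · exact absurd ha hPb
    by_cases hQb : Q b
    · obtain ⟨t, hat, htb, ht⟩ := ih hab hQb
      exact ⟨t, hat, htb.trans b.lt_succ_self, ht⟩
    · exact ⟨b, hab, b.lt_succ_self, hPb, hQb⟩

theorem Set.notMem_uIoo_of_mem_uIoo {α : Type*} [LinearOrder α] {a b c : α}
    (h : b ∈ Set.uIoo a c) : a ∉ Set.uIoo b c := by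
  simp only [Set.uIoo, Set.mem_Ioo, inf_lt_iff, lt_sup_iff] at h ⊢
  grind

theorem Finset.two_mul_card_le_of_disjoint_image_swap {α : Type*} [DecidableEq α]
    {S : Finset (α × α)} {Z : Finset α} (hS : S ⊆ Z ×ˢ Z)
    (hswap : Disjoint S (S.image Prod.swap)) : 2 * #S ≤ #Z * #Z := by
  have hswapS : S.image Prod.swap ⊆ Z ×ˢ Z := by
    intro p hp
    obtain ⟨q, hq, rfl⟩ := mem_image.mp hp
    exact mem_product.mpr (mem_product.mp (hS hq)).symm
  calc 2 * #S = #(S ∪ S.image Prod.swap) := by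
        rw [card_union_of_disjoint hswap, card_image_of_injective _ Prod.swap_injective, two_mul]
    _ ≤ #(Z ×ˢ Z) := card_le_card (union_subset hS hswapS)
    _ = #Z * #Z := card_product Z Z

theorem Finset.exists_injective_of_card_le_card_biUnion_add {ι α : Type*} [Fintype ι]
    [DecidableEq α] (t : ι → Finset α) (d : ℕ)
    (h : ∀ s : Finset ι, #s ≤ #(s.biUnion t) + d) :
    ∃ (s : Finset ι) (f : s → α), Fintype.card ι ≤ #s + d ∧ Function.Injective f ∧
      ∀ i, f i ∈ t i.1 := by
  -- Hall's theorem after adding `d` new elements that every `t i` contains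
  let t' : ι → Finset (α ⊕ Fin d) := fun i => (t i).disjSum univ
  have hall : ∀ s : Finset ι, #s ≤ #(s.biUnion t') := by
    intro s
    obtain rfl | ⟨i₀, hi₀⟩ := s.eq_empty_or_nonempty
    · simp
    have hsub : (s.biUnion t).disjSum univ ⊆ s.biUnion t' := by
      rintro (a | j) h
      · obtain ⟨i, hi, ha⟩ := mem_biUnion.mp (inl_mem_disjSum.mp h)
        exact mem_biUnion.mpr ⟨i, hi, inl_mem_disjSum.mpr ha⟩
      · exact mem_biUnion.mpr ⟨i₀, hi₀, inr_mem_disjSum.mpr (mem_univ j)⟩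
    calc #s ≤ #(s.biUnion t) + d := h s
      _ = #((s.biUnion t).disjSum univ) := by rw [card_disjSum, card_univ, Fintype.card_fin]
      _ ≤ #(s.biUnion t') := card_le_card hsub
  obtain ⟨g, hg, hgt⟩ := (all_card_le_biUnion_card_iff_exists_injective t').mp hall
  let s : Finset ι := univ.filter fun i => (g i).isLeft
  have hcompl : #sᶜ ≤ d := by
    have hmaps : ∀ i ∈ sᶜ, g i ∈ univ.map Function.Embedding.inr := by
      intro i hi
      obtain ⟨j, hj⟩ := Sum.isRight_iff.mp (by simpa [s] using hi)
      exact hj ▸ mem_map_of_mem _ (mem_univ j)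
    simpa using card_le_card_of_injOn g hmaps hg.injOn
  refine ⟨s, fun i => (g i).getLeft (mem_filter.mp i.2).2, ?_, fun i j hij => ?_, fun i => ?_⟩
  · have := card_add_card_compl s
    omega
  · exact Subtype.ext (hg (by simpa using hij))
  · have := hgt i
    rw [← Sum.inl_getLeft (g i) (mem_filter.mp i.2).2] at this
    exact inl_mem_disjSum.mp this

namespace SimpleGraph

variable {V : Type*} {G : SimpleGraph V} {n : ℕ}

theorem Hom.exists_mem_uIoo_notMem_of_pathGraph (f : pathGraph n →g G) {X Y : Set V}
    (hXY : ∀ x ∈ X, ∀ y ∈ Y, ¬ G.Adj x y) {a b : Fin n} (hab : a ≠ b)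
    (ha : f a ∈ X) (hb : f b ∈ Y) : ∃ t ∈ Set.uIoo a b, f t ∉ X ∧ f t ∉ Y := by
  wlog hlt : a < b generalizing X Y a b
  · obtain ⟨t, ht, htY, htX⟩ := this (fun y hy x hx h => hXY x hx y hy h.symm) hab.symm hb ha
      (hab.symm.lt_of_le (not_lt.mp hlt))
    exact ⟨t, Set.uIoo_comm a b ▸ ht, htX, htY⟩
  obtain ⟨t, hat, htb, htX, htY⟩ := Nat.exists_between_of_forall_not_succ
    (P := fun t => ∃ h : t < n, f ⟨t, h⟩ ∈ X) (Q := fun t => ∃ h : t < n, f ⟨t, h⟩ ∈ Y)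
    (fun t ⟨_, hX⟩ ⟨_, hY⟩ => hXY _ hX _ hY (f.map_adj (pathGraph_adj.mpr (Or.inl rfl))))
    hlt ⟨a.isLt, ha⟩ ⟨b.isLt, hb⟩
  have htn : t < n := htb.trans b.isLt
  exact ⟨⟨t, htn⟩, Set.Ioo_subset_uIoo ⟨hat, htb⟩, fun h => htX ⟨htn, h⟩, fun h => htY ⟨htn, h⟩⟩

theorem Hom.pathGraph_forall_mem_or_forall_mem {f : pathGraph n →g G} {X Y : Set V}
    (hXY : ∀ x ∈ X, ∀ y ∈ Y, ¬ G.Adj x y) (hf : ∀ t, f t ∈ X ∨ f t ∈ Y) :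
    (∀ t, f t ∈ X) ∨ ∀ t, f t ∈ Y := by
  by_contra! ⟨⟨a, haX⟩, b, hbY⟩
  have haY := (hf a).resolve_left haX
  have hbX := (hf b).resolve_right hbY
  obtain ⟨t, -, htX, htY⟩ :=
    f.exists_mem_uIoo_notMem_of_pathGraph hXY (by rintro rfl; exact haX hbX) hbX haY
  exact (hf t).elim htX htY

end SimpleGraph

abbrev mesh (k : ℕ) : SimpleGraph (Fin k × Fin k) := pathGraph k □ pathGraph k

section Mesh

variable {k : ℕ} {X Y : Finset (Fin k × Fin k)}

theorem mesh_two_mul_card_le_of_forall_mem (hd : Disjoint X Y)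
    (hXY : ∀ x ∈ X, ∀ y ∈ Y, ¬ (mesh k).Adj x y) {r c : Fin k}
    (hrow : ∀ j, (r, j) ∈ X) (hcol : ∀ i, (i, c) ∈ X) :
    2 * #Y ≤ #(X ∪ Y)ᶜ * #(X ∪ Y)ᶜ := by
  have hYX : ∀ y ∈ (Y : Set _), ∀ x ∈ (X : Set _), ¬ (mesh k).Adj y x :=
    fun y hy x hx h => hXY x hx y hy h.symm
  have hZ : ∀ v, v ∉ (X : Set _) → v ∉ (Y : Set _) → v ∈ (X ∪ Y)ᶜ := by simp_all
  have hrowZ : ∀ y ∈ Y, ∃ t ∈ Set.uIoo y.2 c, (y.1, t) ∈ (X ∪ Y)ᶜ := by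
    rintro ⟨i, j⟩ hy
    obtain ⟨t, ht, htY, htX⟩ := (boxProdRight (pathGraph k) (pathGraph k) i).toHom
      |>.exists_mem_uIoo_notMem_of_pathGraph hYX
        (by rintro rfl; exact disjoint_left.mp hd (hcol i) hy) hy (hcol i)
    exact ⟨t, ht, hZ _ htX htY⟩
  have hcolZ : ∀ y ∈ Y, ∃ s ∈ Set.uIoo y.1 r, (s, y.2) ∈ (X ∪ Y)ᶜ := by
    rintro ⟨i, j⟩ hy
    obtain ⟨s, hs, hsY, hsX⟩ := (boxProdLeft (pathGraph k) (pathGraph k) j).toHom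
      |>.exists_mem_uIoo_notMem_of_pathGraph hYX
        (by rintro rfl; exact disjoint_left.mp hd (hrow j) hy) hy (hrow j)
    exact ⟨s, hs, hZ _ hsX hsY⟩
  have : Nonempty (Fin k) := ⟨r⟩
  choose! t ht htZ using hrowZ
  choose! s hs hsZ using hcolZ
  let g : Fin k × Fin k → (Fin k × Fin k) × (Fin k × Fin k) := fun y => ((y.1, t y), (s y, y.2))
  have hg : Set.InjOn g Y := fun y _ y' _ h =>
    Prod.ext (congrArg (·.1.1) h) (congrArg (·.2.2) h)
  have hswap : Disjoint (Y.image g) ((Y.image g).image Prod.swap) := by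
    refine disjoint_left.mpr fun p hp hp' => ?_
    obtain ⟨y, hy, rfl⟩ := mem_image.mp hp
    obtain ⟨_, hq, h⟩ := mem_image.mp hp'
    obtain ⟨y', hy', rfl⟩ := mem_image.mp hq
    simp only [g, Prod.swap_prod_mk, Prod.mk.injEq] at h
    obtain ⟨⟨-, h₁⟩, -, h₂⟩ := h
    exact Set.notMem_uIoo_of_mem_uIoo (h₂ ▸ ht y hy) (h₁ ▸ ht y' hy')
  calc 2 * #Y = 2 * #(Y.image g) := by rw [card_image_of_injOn hg]
    _ ≤ _ := two_mul_card_le_of_disjoint_image_swap (fun p hp => by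
      obtain ⟨y, hy, rfl⟩ := mem_image.mp hp
      exact mem_product.mpr ⟨htZ y hy, hsZ y hy⟩) hswap

theorem mesh_two_mul_card_le_or (hd : Disjoint X Y)
    (hXY : ∀ x ∈ X, ∀ y ∈ Y, ¬ (mesh k).Adj x y) (hZ : #(X ∪ Y)ᶜ < k) :
    2 * #X ≤ #(X ∪ Y)ᶜ * #(X ∪ Y)ᶜ ∨ 2 * #Y ≤ #(X ∪ Y)ᶜ * #(X ∪ Y)ᶜ := by
  have hk : #((X ∪ Y)ᶜ) < #(univ : Finset (Fin k)) := by simpa using hZ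
  obtain ⟨r, -, hr⟩ :=
    exists_mem_notMem_of_card_lt_card (card_image_le (f := Prod.fst) |>.trans_lt hk)
  obtain ⟨c, -, hc⟩ :=
    exists_mem_notMem_of_card_lt_card (card_image_le (f := Prod.snd) |>.trans_lt hk)
  have hXY' : ∀ x ∈ (X : Set _), ∀ y ∈ (Y : Set _), ¬ (mesh k).Adj x y := hXY
  have hcover : ∀ v, v ∉ (X ∪ Y)ᶜ → v ∈ (X : Set _) ∨ v ∈ (Y : Set _) :=
    fun v hv => mem_union.mp (not_not.mp (mt mem_compl.mpr hv))
  have hrow := (boxProdRight (pathGraph k) (pathGraph k) r).toHom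
    |>.pathGraph_forall_mem_or_forall_mem hXY' fun j =>
      hcover _ fun h => hr (mem_image_of_mem Prod.fst h)
  have hcol := (boxProdLeft (pathGraph k) (pathGraph k) c).toHom
    |>.pathGraph_forall_mem_or_forall_mem hXY' fun i =>
      hcover _ fun h => hc (mem_image_of_mem Prod.snd h)
  rcases hrow with hrow | hrow <;> rcases hcol with hcol | hcol
  · exact .inr (mesh_two_mul_card_le_of_forall_mem hd hXY hrow hcol)
  · exact absurd (hcol r) (disjoint_left.mp hd (hrow c))
  · exact absurd (hrow c) (disjoint_left.mp hd (hcol r))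
  · refine .inl ?_
    rw [union_comm]
    exact mesh_two_mul_card_le_of_forall_mem hd.symm (fun y hy x hx h => hXY x hx y hy h.symm)
      hrow hcol

theorem mesh_card_le_card_biUnion_add {W : Finset (Fin k × Fin k)} (hW : 2 * #W = k * k)
    (s : Finset W) : #s ≤ #(s.biUnion fun w => Wᶜ.filter ((mesh k).Adj w)) + (#W - k) := by
  set N := s.biUnion fun w => Wᶜ.filter ((mesh k).Adj w)
  by_contra! h
  -- `s` and the non-neighbours of `s` outside `W` are separated by `(W \ s) ∪ N`
  set X := s.map (Function.Embedding.subtype (· ∈ W))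
  set Y := Wᶜ \ N
  have hd : Disjoint X Y := by
    refine disjoint_of_subset_left ?_ (disjoint_of_subset_right sdiff_subset disjoint_compl_right)
    intro x hx
    obtain ⟨w, -, rfl⟩ := mem_map.mp hx
    exact w.2
  have hXY : ∀ x ∈ X, ∀ y ∈ Y, ¬ (mesh k).Adj x y := by
    intro x hx y hy hxy
    obtain ⟨w, hw, rfl⟩ := mem_map.mp hx
    obtain ⟨hyW, hyN⟩ := mem_sdiff.mp hy
    exact hyN (mem_biUnion.mpr ⟨w, hw, mem_filter.mpr ⟨hyW, hxy⟩⟩)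
  have hs : #s ≤ #W := by simpa using card_le_univ s
  have hX : #X = #s := card_map _
  have hY : #Wᶜ - #N ≤ #Y := le_card_sdiff N Wᶜ
  have hWc : #Wᶜ = k * k - #W := by simp [card_compl]
  have hZ : #(X ∪ Y)ᶜ = k * k - (#X + #Y) := by
    rw [card_compl, card_union_of_disjoint hd, Fintype.card_prod, Fintype.card_fin]
  have hZk : #(X ∪ Y)ᶜ < k := by omega
  have hsq : #(X ∪ Y)ᶜ * #(X ∪ Y)ᶜ + 2 * k ≤ k * k + 1 := by
    obtain ⟨m, rfl⟩ : ∃ m, k = m + 1 := ⟨k - 1, by omega⟩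
    nlinarith [Nat.mul_self_le_mul_self (Nat.lt_succ_iff.mp hZk)]
  rcases mesh_two_mul_card_le_or hd hXY hZk with h' | h' <;> omega

end Mesh

theorem mesh_half_matching_general (k : ℕ)
    (W : Finset (Fin k × Fin k)) (hW : 2 * W.card = k * k) :
    ∃ f : Fin k → (Fin k × Fin k) × (Fin k × Fin k),
      (∀ i, (f i).1 ∈ W ∧ (f i).2 ∉ W ∧
        (SimpleGraph.boxProd (SimpleGraph.pathGraph k) (SimpleGraph.pathGraph k)).Adj
          (f i).1 (f i).2) ∧
      Function.Injective (fun i => (f i).1) ∧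
      Function.Injective (fun i => (f i).2) := by
  obtain ⟨s, f, hcard, hf, hft⟩ := exists_injective_of_card_le_card_biUnion_add _ _
    (mesh_card_le_card_biUnion_add hW)
  have hks : k ≤ #s := by
    rw [Fintype.card_coe] at hcard
    rcases Nat.lt_or_ge k 2 with hk | hk
    · interval_cases k <;> omega
    · have := Nat.mul_le_mul_right k hk
      omega
  obtain ⟨e⟩ := Function.Embedding.nonempty_of_card_le (α := Fin k) (β := s) (by simpa using hks)
  refine ⟨fun i => ((e i).1.1, f (e i)), fun i => ?_, fun i j h => e.injective ?_,
    fun i j h => e.injective (hf h)⟩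
  · obtain ⟨hW, hadj⟩ := mem_filter.mp (hft (e i))
    exact ⟨(e i).1.2, mem_compl.mp hW, hadj⟩
  · exact Subtype.ext (Subtype.ext h)

/-- In the `√n × √n` mesh, every vertex subset `W` of size `n/2`
admits a matching of size at least `√n` to its complement: there are `√n` pairwise
vertex-disjoint edges, each with one endpoint in `W` and one outside `W`.
(Disjointness reduces to the `W`-endpoints being pairwise distinct and the
complement endpoints being pairwise distinct.) -/
theorem mesh_half_matching (k : ℕ) (hk : 1 ≤ k)
    (W : Finset (Fin k × Fin k)) (hW : 2 * W.card = k * k) :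
    ∃ f : Fin k → (Fin k × Fin k) × (Fin k × Fin k),
      (∀ i, (f i).1 ∈ W ∧ (f i).2 ∉ W ∧
        (SimpleGraph.boxProd (SimpleGraph.pathGraph k) (SimpleGraph.pathGraph k)).Adj
          (f i).1 (f i).2) ∧
      Function.Injective (fun i => (f i).1) ∧
      Function.Injective (fun i => (f i).2) :=
  mesh_half_matching_general k W hW
end
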